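/- arXiv:2604.02099 — 6 statements merged into one kernel-verified Lean document; each statement's English description precedes it below -/
import Mathlib

section
/- Let g, n ≥ 0 be integers. For any two objects (Γ, σ) and (Γ', σ') of Gr_{g,n}, there exists a finite sequence of objects of Gr_{g,n} beginning with (Γ, σ) and ending with (Γ', σ') in which each consecutive pair of objects is related by an isomorphism of marked graphs, by an elementary collapse, or by the inverse of an elementary collapse (i.e., the category Gr_{g,n} is connected by zig-zags of such moves). -/
/-- A finite graph `(V, H, r, i)` in the sense of the paper, together with a marking
`σ : Fin n → V` of `n` distinct vertices. -/
structure MGraph (n : ℕ) where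
  /-- vertices -/
  V : Type
  /-- half-edges -/
  H : Type
  [fintV : Fintype V]
  [fintH : Fintype H]
  /-- the root map -/
  r : H → V
  /-- the half-edge involution -/
  inv : H → H
  inv_involutive : ∀ h, inv (inv h) = h
  inv_ne : ∀ h, inv h ≠ h
  /-- the marking -/
  mark : Fin n → V
  mark_injective : Function.Injective mark

attribute [instance] MGraph.fintV MGraph.fintH

namespace MGraph

variable {n : ℕ}

/-- The number of edges: edges are the orbits `{h, i h}` of the fixed-point-free
involution, so there are `|H| / 2` of them. -/
noncomputable def numEdges (G : MGraph n) : ℕ := Nat.card G.H / 2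

/-- The valence of a vertex is the number of half-edges rooted at it. -/
noncomputable def valence (G : MGraph n) (v : G.V) : ℕ := Nat.card {h : G.H // G.r h = v}

/-- Two vertices are adjacent if some edge joins them. -/
def Adj (G : MGraph n) (v w : G.V) : Prop := ∃ h, G.r h = v ∧ G.r (G.inv h) = w

/-- The graph is connected: it is nonempty and any two vertices are joined by a path. -/
def Connected (G : MGraph n) : Prop :=
  Nonempty G.V ∧ ∀ v w : G.V, Relation.ReflTransGen G.Adj v w

/-- `(Γ, σ)` is an object of `Gr_{g,n}`: connected, of first Betti number
`|E| − |V| + 1 = g`, and every unmarked vertex has valence at least 3. -/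
def IsObj (g : ℕ) (G : MGraph n) : Prop :=
  G.Connected ∧ G.numEdges + 1 = g + Nat.card G.V ∧
    ∀ v : G.V, v ∉ Set.range G.mark → 3 ≤ G.valence v

/-- An isomorphism of marked graphs: bijections on vertices and half-edges commuting with
the root maps, the involutions, and the markings. -/
def MIso (G₁ G₂ : MGraph n) : Prop :=
  ∃ (eV : G₁.V ≃ G₂.V) (eH : G₁.H ≃ G₂.H),
    (∀ h, eV (G₁.r h) = G₂.r (eH h)) ∧
    (∀ h, eH (G₁.inv h) = G₂.inv (eH h)) ∧
    (∀ k, eV (G₁.mark k) = G₂.mark k)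

/-- `G₂` is an elementary collapse of `G₁`: there is a non-loop edge `{h₀, inv h₀}` of
`G₁`, at most one of whose endpoints is marked, such that `G₂` is obtained from `G₁` by
deleting the two half-edges `h₀, inv h₀` and identifying the two endpoints (the merged
vertex carrying the marking label of the marked endpoint, if any). -/
def IsElemCollapse (G₁ G₂ : MGraph n) : Prop :=
  ∃ h₀ : G₁.H,
    G₁.r h₀ ≠ G₁.r (G₁.inv h₀) ∧
    ¬ (G₁.r h₀ ∈ Set.range G₁.mark ∧ G₁.r (G₁.inv h₀) ∈ Set.range G₁.mark) ∧
    ∃ (πV : G₁.V → G₂.V) (πH : {x : G₁.H // x ≠ h₀ ∧ x ≠ G₁.inv h₀} → G₂.H),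
      Function.Surjective πV ∧
      Function.Bijective πH ∧
      πV (G₁.r h₀) = πV (G₁.r (G₁.inv h₀)) ∧
      (∀ x y : G₁.V, πV x = πV y →
        x = y ∨ (x = G₁.r h₀ ∧ y = G₁.r (G₁.inv h₀)) ∨
          (x = G₁.r (G₁.inv h₀) ∧ y = G₁.r h₀)) ∧
      (∀ x, G₂.r (πH x) = πV (G₁.r x.1)) ∧
      (∀ x y, G₁.inv x.1 = y.1 → G₂.inv (πH x) = πH y) ∧
      (∀ k, πV (G₁.mark k) = G₂.mark k)

end MGraph

section Helpers

open Classical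
attribute [local instance] Classical.propDecidable

/-- A finite type with a fixed-point-free involution has even cardinality. -/
lemma even_card_of_fpf {H : Type} [Fintype H] (i : H → H)
    (hinv : ∀ h, i (i h) = h) (hne : ∀ h, i h ≠ h) : Even (Nat.card H) := by
  classical
  suffices hs : ∀ (m : ℕ) (s : Finset H), s.card = m → (∀ x ∈ s, i x ∈ s) → Even s.card by
    rw [Nat.card_eq_fintype_card, ← Finset.card_univ]
    exact hs _ Finset.univ rfl (fun x _ => Finset.mem_univ _)
  intro m
  induction m using Nat.strong_induction_on with
  | _ m ih =>
    intro s hm hcl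
    rcases s.eq_empty_or_nonempty with rfl | ⟨x, hx⟩
    · simp
    · have hix : i x ∈ s := hcl x hx
      have hxne : x ≠ i x := fun h => hne x h.symm
      set t := (s.erase x).erase (i x) with ht
      have htcl : ∀ y ∈ t, i y ∈ t := by
        intro y hy
        have hys : y ∈ s := Finset.mem_of_mem_erase (Finset.mem_of_mem_erase hy)
        have hy1 : y ≠ i x := Finset.ne_of_mem_erase hy
        have hy2 : y ≠ x := Finset.ne_of_mem_erase (Finset.mem_of_mem_erase hy)
        refine Finset.mem_erase.2 ⟨?_, Finset.mem_erase.2 ⟨?_, hcl y hys⟩⟩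
        · intro h; exact hy2 (by rw [← hinv y, h, hinv])
        · intro h; exact hy1 (by rw [← hinv y, h])
      have hcard : t.card + 2 = s.card := by
        have h1 : (s.erase x).card + 1 = s.card := Finset.card_erase_add_one hx
        have h2 : t.card + 1 = (s.erase x).card :=
          Finset.card_erase_add_one (Finset.mem_erase.2 ⟨fun h => hxne h.symm, hix⟩)
        omega
      have : Even t.card := ih t.card (by omega) t rfl htcl
      rw [← hcard]
      rcases this with ⟨k, hk⟩
      exact ⟨k + 1, by omega⟩

lemma nat_card_option {A : Type} [Finite A] : Nat.card (Option A) = Nat.card A + 1 := by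
  have := Fintype.ofFinite A
  simp [Nat.card_eq_fintype_card]

/-- Removing one element satisfying `p` from the subtype of `p`. -/
lemma nat_card_subtype_erase {A : Type} [Finite A] (p : A → Prop) (a : A) (pa : p a) :
    Nat.card {x // p x} = Nat.card {x // p x ∧ x ≠ a} + 1 := by
  classical
  have e : {x // p x} ≃ Option {x // p x ∧ x ≠ a} :=
    { toFun := fun x => if h : x.1 = a then none else some ⟨x.1, x.2, h⟩
      invFun := fun o => o.elim ⟨a, pa⟩ (fun y => ⟨y.1, y.2.1⟩)
      left_inv := by
        rintro ⟨x, hx⟩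
        by_cases h : x = a <;> simp [h]
      right_inv := by
        rintro (_ | ⟨y, hy1, hy2⟩)
        · simp
        · simp [hy2] }
  rw [Nat.card_congr e, nat_card_option]

end Helpers
section Helpers2

lemma nat_card_pair_compl {A : Type} [Finite A] (a b : A) (hab : a ≠ b) :
    Nat.card {x : A // x ≠ a ∧ x ≠ b} + 2 = Nat.card A := by
  classical
  have e1 : Nat.card {x : A // True} = Nat.card {x : A // True ∧ x ≠ a} + 1 :=
    nat_card_subtype_erase (fun _ => True) a trivial
  have e2 : Nat.card {x : A // x ≠ a} = Nat.card {x : A // x ≠ a ∧ x ≠ b} + 1 :=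
    nat_card_subtype_erase (fun x => x ≠ a) b (Ne.symm hab)
  have e3 : Nat.card {x : A // True} = Nat.card A :=
    Nat.card_congr (Equiv.subtypeUnivEquiv (fun _ => trivial))
  have e4 : Nat.card {x : A // True ∧ x ≠ a} = Nat.card {x : A // x ≠ a} :=
    Nat.card_congr (Equiv.subtypeEquivRight (by simp))
  omega

/-- Any two fixed-point-free involutions on finite types of the same cardinality
are conjugate. -/
lemma fpf_conj (m : ℕ) : ∀ (A B : Type) [Finite A] [Finite B]
    (iA : A → A) (iB : B → B),
    (∀ x, iA (iA x) = x) → (∀ x, iA x ≠ x) →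
    (∀ x, iB (iB x) = x) → (∀ x, iB x ≠ x) →
    Nat.card A = m → Nat.card B = m →
    ∃ e : A ≃ B, ∀ x, e (iA x) = iB (e x) := by
  induction m using Nat.strong_induction_on with
  | _ m ih =>
    intro A B _ _ iA iB hAinv hAne hBinv hBne hcA hcB
    classical
    rcases Nat.eq_zero_or_pos m with rfl | hm
    · have : IsEmpty A := ((Nat.card_eq_zero.1 hcA).resolve_right (fun h => h.not_finite ‹_›))
      have : IsEmpty B := ((Nat.card_eq_zero.1 hcB).resolve_right (fun h => h.not_finite ‹_›))
      exact ⟨Equiv.equivOfIsEmpty A B, fun x => (IsEmpty.false x).elim⟩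
    · have hA : Nonempty A := (Nat.card_pos_iff.1 (show 0 < Nat.card A by omega)).1
      have hB : Nonempty B := (Nat.card_pos_iff.1 (show 0 < Nat.card B by omega)).1
      obtain ⟨a⟩ := hA; obtain ⟨b⟩ := hB
      set A' := {x : A // x ≠ a ∧ x ≠ iA a}
      set B' := {x : B // x ≠ b ∧ x ≠ iB b}
      have hcA' : Nat.card A' + 2 = m := by
        rw [← hcA]; exact nat_card_pair_compl a (iA a) (fun h => hAne a h.symm)
      have hcB' : Nat.card B' + 2 = m := by
        rw [← hcB]; exact nat_card_pair_compl b (iB b) (fun h => hBne b h.symm)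
      have memA' : ∀ x : A', iA x.1 ≠ a ∧ iA x.1 ≠ iA a := by
        rintro ⟨x, hx1, hx2⟩
        constructor
        · intro h; apply hx2; rw [← hAinv x, h]
        · intro h; apply hx1
          have := congrArg iA h; rwa [hAinv, hAinv] at this
      have memB' : ∀ x : B', iB x.1 ≠ b ∧ iB x.1 ≠ iB b := by
        rintro ⟨x, hx1, hx2⟩
        constructor
        · intro h; apply hx2; rw [← hBinv x, h]
        · intro h; apply hx1
          have := congrArg iB h; rwa [hBinv, hBinv] at this
      set iA' : A' → A' := fun x => ⟨iA x.1, memA' x⟩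
      set iB' : B' → B' := fun x => ⟨iB x.1, memB' x⟩
      obtain ⟨e', he'⟩ := ih (Nat.card A') (by omega) A' B' iA' iB'
        (fun x => Subtype.ext (hAinv x.1)) (fun x hx => hAne x.1 (congrArg Subtype.val hx))
        (fun x => Subtype.ext (hBinv x.1)) (fun x hx => hBne x.1 (congrArg Subtype.val hx))
        rfl (by omega)
      set f : A → B := fun x =>
        if hx : x = a then b else if hx2 : x = iA a then iB b else (e' ⟨x, hx, hx2⟩).1
      have hfa : f a = b := by simp [f]
      have hfia : f (iA a) = iB b := by
        have h1 : iA a ≠ a := hAne a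
        simp [f, h1]
      have hfelse : ∀ (x : A) (h1 : x ≠ a) (h2 : x ≠ iA a), f x = (e' ⟨x, h1, h2⟩).1 := by
        intro x h1 h2; simp [f, h1, h2]
      have hinj : Function.Injective f := by
        intro x y hxy
        by_cases hx1 : x = a <;> by_cases hy1 : y = a
        · rw [hx1, hy1]
        · exfalso
          rw [hx1, hfa] at hxy
          by_cases hy2 : y = iA a
          · rw [hy2, hfia] at hxy
            exact hBne b hxy.symm
          · rw [hfelse y hy1 hy2] at hxy
            exact (e' ⟨y, hy1, hy2⟩).2.1 hxy.symm
        · exfalso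
          rw [hy1, hfa] at hxy
          by_cases hx2 : x = iA a
          · rw [hx2, hfia] at hxy
            exact hBne b hxy
          · rw [hfelse x hx1 hx2] at hxy
            exact (e' ⟨x, hx1, hx2⟩).2.1 hxy
        · by_cases hx2 : x = iA a <;> by_cases hy2 : y = iA a
          · rw [hx2, hy2]
          · exfalso
            rw [hx2, hfia, hfelse y hy1 hy2] at hxy
            exact (e' ⟨y, hy1, hy2⟩).2.2 hxy.symm
          · exfalso
            rw [hy2, hfia, hfelse x hx1 hx2] at hxy
            exact (e' ⟨x, hx1, hx2⟩).2.2 hxy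
          · rw [hfelse x hx1 hx2, hfelse y hy1 hy2] at hxy
            have := e'.injective (Subtype.ext hxy)
            exact congrArg Subtype.val this
      have hbij : Function.Bijective f :=
        (Nat.bijective_iff_injective_and_card f).2 ⟨hinj, by omega⟩
      refine ⟨Equiv.ofBijective f hbij, ?_⟩
      intro x
      show f (iA x) = iB (f x)
      by_cases hx1 : x = a
      · rw [hx1, hfa, hfia]
      · by_cases hx2 : x = iA a
        · rw [hx2, hAinv, hfa, hfia, hBinv]
        · have h1 : iA x ≠ a := by
            intro h; apply hx2; rw [← hAinv x, h]
          have h2 : iA x ≠ iA a := by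
            intro h; apply hx1
            have := congrArg iA h; rwa [hAinv, hAinv] at this
          rw [hfelse _ h1 h2, hfelse _ hx1 hx2]
          have := he' ⟨x, hx1, hx2⟩
          have hval := congrArg Subtype.val this
          simpa [iA', iB'] using hval

end Helpers2
section Helpers3

lemma nat_card_ne_compl {A : Type} [Finite A] (a : A) :
    Nat.card {x : A // x ≠ a} + 1 = Nat.card A := by
  classical
  have e1 : Nat.card {x : A // True} = Nat.card {x : A // True ∧ x ≠ a} + 1 :=
    nat_card_subtype_erase (fun _ => True) a trivial
  have e3 : Nat.card {x : A // True} = Nat.card A :=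
    Nat.card_congr (Equiv.subtypeUnivEquiv (fun _ => trivial))
  have e4 : Nat.card {x : A // True ∧ x ≠ a} = Nat.card {x : A // x ≠ a} :=
    Nat.card_congr (Equiv.subtypeEquivRight (by simp))
  omega

end Helpers3

namespace MGraph

variable {n g : ℕ}

lemma collapse_step (G : MGraph n) (hG : G.IsObj g) (h₀ : G.H)
    (hne : G.r h₀ ≠ G.r (G.inv h₀)) (hb : G.r (G.inv h₀) ∉ Set.range G.mark) :
    ∃ G₂ : MGraph n, G₂.IsObj g ∧ G.IsElemCollapse G₂ ∧
      Nat.card G₂.V + 1 = Nat.card G.V := by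
  classical
  set a := G.r h₀ with ha
  set b := G.r (G.inv h₀) with hbdef
  have hinvne : ∀ x : G.H, x ≠ h₀ ∧ x ≠ G.inv h₀ → G.inv x ≠ h₀ ∧ G.inv x ≠ G.inv h₀ := by
    rintro x ⟨hx1, hx2⟩
    constructor
    · intro e; apply hx2; rw [← G.inv_involutive x, e]
    · intro e; apply hx1
      have := congrArg G.inv e; rwa [G.inv_involutive, G.inv_involutive] at this
  set G₂ : MGraph n :=
    { V := {v : G.V // v ≠ b}
      H := {x : G.H // x ≠ h₀ ∧ x ≠ G.inv h₀}
      r := fun x => if hx : G.r x.1 = b then ⟨a, hne⟩ else ⟨G.r x.1, hx⟩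
      inv := fun x => ⟨G.inv x.1, hinvne x.1 x.2⟩
      inv_involutive := fun x => Subtype.ext (G.inv_involutive x.1)
      inv_ne := fun x e => G.inv_ne x.1 (congrArg Subtype.val e)
      mark := fun k => ⟨G.mark k, fun e => hb ⟨k, e⟩⟩
      mark_injective := fun k l e => G.mark_injective (congrArg Subtype.val e) } with hG₂
  set πV : G.V → G₂.V := fun v => if hv : v = b then ⟨a, hne⟩ else ⟨v, hv⟩ with hπV
  have hπVb : πV b = ⟨a, hne⟩ := by simp [hπV]
  have hπVne : ∀ (v : G.V) (hv : v ≠ b), πV v = ⟨v, hv⟩ := by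
    intro v hv; simp [hπV, hv]
  have hrcompat : ∀ x : {x : G.H // x ≠ h₀ ∧ x ≠ G.inv h₀}, G₂.r x = πV (G.r x.1) := by
    intro x; rfl
  -- the collapse relation
  have hcoll : G.IsElemCollapse G₂ := by
    refine ⟨h₀, hne, fun hc => hb hc.2, πV, fun x => x, ?_, Function.bijective_id, ?_, ?_, ?_, ?_, ?_⟩
    · intro v
      exact ⟨v.1, by rw [hπVne v.1 v.2]⟩
    · rw [← ha, ← hbdef, hπVb, hπVne a hne]
    · intro x y hxy
      by_cases hx : x = b <;> by_cases hy : y = b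
      · left; rw [hx, hy]
      · right; right
        rw [hx, hπVb, hπVne y hy] at hxy
        exact ⟨hx, (congrArg Subtype.val hxy).symm⟩
      · right; left
        rw [hy, hπVb, hπVne x hx] at hxy
        exact ⟨congrArg Subtype.val hxy, hy⟩
      · left
        rw [hπVne x hx, hπVne y hy] at hxy
        exact congrArg Subtype.val hxy
    · intro x; exact hrcompat x
    · intro x y hxy; exact Subtype.ext hxy
    · intro k
      rw [hπVne (G.mark k) (fun e => hb ⟨k, e⟩)]
  -- cardinalities
  have hcardH : Nat.card G₂.H + 2 = Nat.card G.H :=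
    nat_card_pair_compl h₀ (G.inv h₀) (fun e => G.inv_ne h₀ e.symm)
  have hcardV : Nat.card G₂.V + 1 = Nat.card G.V := nat_card_ne_compl b
  -- connectivity
  have hstep : ∀ v w, G.Adj v w → Relation.ReflTransGen G₂.Adj (πV v) (πV w) := by
    rintro v w ⟨m, hm1, hm2⟩
    by_cases hm : m = h₀
    · have : πV v = πV w := by
        rw [← hm1, ← hm2, hm, ← ha, ← hbdef, hπVb, hπVne a hne]
      rw [this]
    · by_cases hm' : m = G.inv h₀
      · have : πV v = πV w := by
          rw [← hm1, ← hm2, hm', G.inv_involutive, ← ha, ← hbdef, hπVb, hπVne a hne]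
        rw [this]
      · refine Relation.ReflTransGen.single ⟨⟨m, hm, hm'⟩, ?_, ?_⟩
        · rw [hrcompat, hm1]
        · show G₂.r ⟨G.inv m, _⟩ = πV w
          rw [hrcompat, hm2]
  have hlift : ∀ v w, Relation.ReflTransGen G.Adj v w →
      Relation.ReflTransGen G₂.Adj (πV v) (πV w) := by
    intro v w hvw
    induction hvw with
    | refl => exact Relation.ReflTransGen.refl
    | tail _ h2 ih => exact ih.trans (hstep _ _ h2)
  have hconn : G₂.Connected := by
    refine ⟨⟨⟨a, hne⟩⟩, ?_⟩
    intro v w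
    have := hlift v.1 w.1 (hG.1.2 v.1 w.1)
    rwa [hπVne v.1 v.2, hπVne w.1 w.2] at this
  -- valence
  have hval : ∀ v : G₂.V, v ∉ Set.range G₂.mark → 3 ≤ G₂.valence v := by
    intro v hv
    have hv1 : v.1 ∉ Set.range G.mark := by
      rintro ⟨k, hk⟩
      exact hv ⟨k, Subtype.ext hk⟩
    by_cases hva : v.1 = a
    · -- merged vertex
      have hamark : a ∉ Set.range G.mark := hva ▸ hv1
      set F : {h : G.H // G.r h = a ∧ h ≠ h₀} ⊕ {h : G.H // G.r h = b ∧ h ≠ G.inv h₀} →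
          {x : G₂.H // G₂.r x = v} := fun m =>
        match m with
        | Sum.inl m => ⟨⟨m.1, m.2.2, fun e => hne (by rw [← m.2.1, e])⟩, by
            rw [hrcompat]
            show πV (G.r m.1) = v
            rw [m.2.1, hπVne a hne]
            exact Subtype.ext hva.symm⟩
        | Sum.inr m => ⟨⟨m.1, fun e => hne (by rw [← m.2.1, e]), m.2.2⟩, by
            rw [hrcompat]
            show πV (G.r m.1) = v
            rw [m.2.1, hπVb]
            exact Subtype.ext hva.symm⟩ with hF
      have hFinj : Function.Injective F := by
        rintro (x | x) (y | y) hxy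
        · have h1 : (x.1 : G.H) = (y.1 : G.H) := congrArg (fun t => t.1.1) hxy
          exact congrArg Sum.inl (Subtype.ext h1)
        · exfalso
          have h1 : (x.1 : G.H) = (y.1 : G.H) := congrArg (fun t => t.1.1) hxy
          have h2 : G.r x.1 = G.r y.1 := congrArg G.r h1
          rw [x.2.1, y.2.1] at h2
          exact hne h2
        · exfalso
          have h1 : (x.1 : G.H) = (y.1 : G.H) := congrArg (fun t => t.1.1) hxy
          have h2 : G.r x.1 = G.r y.1 := congrArg G.r h1
          rw [x.2.1, y.2.1] at h2
          exact hne h2.symm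
        · have h1 : (x.1 : G.H) = (y.1 : G.H) := congrArg (fun t => t.1.1) hxy
          exact congrArg Sum.inr (Subtype.ext h1)
      have hcard := Nat.card_le_card_of_injective F hFinj
      rw [Nat.card_sum] at hcard
      have h1 : Nat.card {h : G.H // G.r h = a ∧ h ≠ h₀} + 1 = G.valence a :=
        (nat_card_subtype_erase (fun h => G.r h = a) h₀ rfl).symm
      have h2 : Nat.card {h : G.H // G.r h = b ∧ h ≠ G.inv h₀} + 1 = G.valence b :=
        (nat_card_subtype_erase (fun h => G.r h = b) (G.inv h₀) rfl).symm
      have hva3 : 3 ≤ G.valence a := hG.2.2 a hamark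
      have hvb3 : 3 ≤ G.valence b := hG.2.2 b hb
      show 3 ≤ Nat.card {x : G₂.H // G₂.r x = v}
      omega
    · -- untouched vertex
      have hvb : v.1 ≠ b := v.2
      set F : {h : G.H // G.r h = v.1} → {x : G₂.H // G₂.r x = v} := fun m =>
        ⟨⟨m.1, fun e => hva (by rw [← m.2, e]), fun e => hvb (by rw [← m.2, e])⟩, by
          rw [hrcompat]
          show πV (G.r m.1) = v
          rw [m.2, hπVne v.1 v.2]⟩ with hF
      have hFinj : Function.Injective F := by
        intro x y hxy
        have h1 : (x.1 : G.H) = (y.1 : G.H) := congrArg (fun t => t.1.1) hxy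
        exact Subtype.ext h1
      have hcard := Nat.card_le_card_of_injective F hFinj
      have hv3 : 3 ≤ G.valence v.1 := hG.2.2 v.1 hv1
      show 3 ≤ Nat.card {x : G₂.H // G₂.r x = v}
      unfold MGraph.valence at hv3
      omega
  refine ⟨G₂, ⟨hconn, ?_, hval⟩, hcoll, hcardV⟩
  have heuler := hG.2.1
  unfold MGraph.numEdges at heuler ⊢
  omega

lemma collapse_exists (G : MGraph n) (hG : G.IsObj g) (h₀ : G.H)
    (hne : G.r h₀ ≠ G.r (G.inv h₀))
    (hmk : ¬ (G.r h₀ ∈ Set.range G.mark ∧ G.r (G.inv h₀) ∈ Set.range G.mark)) :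
    ∃ G₂ : MGraph n, G₂.IsObj g ∧ G.IsElemCollapse G₂ ∧
      Nat.card G₂.V + 1 = Nat.card G.V := by
  by_cases hb : G.r (G.inv h₀) ∈ Set.range G.mark
  · have ha : G.r h₀ ∉ Set.range G.mark := fun h => hmk ⟨h, hb⟩
    have hne' : G.r (G.inv h₀) ≠ G.r (G.inv (G.inv h₀)) := by
      rw [G.inv_involutive]; exact hne.symm
    have hb' : G.r (G.inv (G.inv h₀)) ∉ Set.range G.mark := by
      rw [G.inv_involutive]; exact ha
    exact G.collapse_step hG (G.inv h₀) hne' hb'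
  · exact G.collapse_step hG h₀ hne hb

end MGraph
namespace MGraph

lemma miso_refl {n : ℕ} (G : MGraph n) : G.MIso G :=
  ⟨Equiv.refl _, Equiv.refl _, fun _ => rfl, fun _ => rfl, fun _ => rfl⟩

lemma miso_symm {n : ℕ} {G₁ G₂ : MGraph n} (h : G₁.MIso G₂) : G₂.MIso G₁ := by
  obtain ⟨eV, eH, h1, h2, h3⟩ := h
  refine ⟨eV.symm, eH.symm, ?_, ?_, ?_⟩
  · intro h
    apply eV.injective
    rw [eV.apply_symm_apply, h1, eH.apply_symm_apply]
  · intro h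
    apply eH.injective
    rw [eH.apply_symm_apply, h2, eH.apply_symm_apply]
  · intro k
    apply eV.injective
    rw [eV.apply_symm_apply, h3]

variable (g n : ℕ)

/-- The zig-zag relation on objects. -/
def RRel (A B : {G : MGraph n // MGraph.IsObj g G}) : Prop :=
  MGraph.MIso A.1 B.1 ∨ MGraph.IsElemCollapse A.1 B.1 ∨ MGraph.IsElemCollapse B.1 A.1

/-- Connectivity by zig-zags. -/
def Conn : {G : MGraph n // MGraph.IsObj g G} → {G : MGraph n // MGraph.IsObj g G} → Prop :=
  Relation.ReflTransGen (RRel g n)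

variable {g n}

lemma rrel_symm : Symmetric (RRel g n) := by
  rintro A B (h | h | h)
  · exact Or.inl (miso_symm h)
  · exact Or.inr (Or.inr h)
  · exact Or.inr (Or.inl h)

lemma conn_symm {A B : {G : MGraph n // MGraph.IsObj g G}} (h : Conn g n A B) :
    Conn g n B A := by
  unfold Conn at h ⊢
  induction h with
  | refl => exact Relation.ReflTransGen.refl
  | tail _ hab ih => exact Relation.ReflTransGen.head (rrel_symm hab) ih

lemma loops_only {n : ℕ} (G : MGraph n) (hc : G.Connected) (v : G.V)
    (hv : ∀ h, G.r h = v → G.r (G.inv h) = v) : ∀ w, w = v := by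
  intro w
  have hp := hc.2 v w
  induction hp with
  | refl => rfl
  | tail _ h2 ih =>
    obtain ⟨m, hm1, hm2⟩ := h2
    rw [ih] at hm1
    rw [← hm2, hv m hm1]

/-- A graph is reduced if every non-loop edge has both endpoints marked. -/
def Reduced {n : ℕ} (G : MGraph n) : Prop :=
  ∀ h, G.r h ≠ G.r (G.inv h) →
    G.r h ∈ Set.range G.mark ∧ G.r (G.inv h) ∈ Set.range G.mark

lemma reduce : ∀ (N : ℕ) (G : MGraph n) (hG : G.IsObj g), Nat.card G.V ≤ N →
    ∃ (G' : MGraph n) (hG' : G'.IsObj g), Conn g n ⟨G, hG⟩ ⟨G', hG'⟩ ∧ Reduced G' := by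
  intro N
  induction N with
  | zero =>
    intro G hG hc
    exfalso
    haveI : Nonempty G.V := hG.1.1
    have := Nat.card_pos (α := G.V)
    omega
  | succ N ih =>
    intro G hG hc
    by_cases hred : Reduced G
    · exact ⟨G, hG, Relation.ReflTransGen.refl, hred⟩
    · rw [Reduced, not_forall] at hred
      obtain ⟨h₀, hh₀⟩ := hred
      rw [Classical.not_imp] at hh₀
      obtain ⟨hne, hmk⟩ := hh₀
      have hmk' : ¬ (G.r h₀ ∈ Set.range G.mark ∧ G.r (G.inv h₀) ∈ Set.range G.mark) := by
        intro hc2; exact hmk ⟨hc2.1, hc2.2⟩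
      obtain ⟨G₂, hG₂, hcoll, hcard⟩ := G.collapse_exists hG h₀ hne hmk'
      obtain ⟨G', hG', hconn, hred'⟩ := ih G₂ hG₂ (by omega)
      exact ⟨G', hG', Relation.ReflTransGen.head (Or.inr (Or.inl hcoll)) hconn, hred'⟩

end MGraph
namespace MGraph

variable {g n : ℕ}

/-- The graph obtained by re-rooting the half-edge `h` at the vertex `w`. -/
noncomputable def moveG (G : MGraph n) (h : G.H) (w : G.V) : MGraph n := by
  classical
  exact
  { V := G.V
    H := G.H
    r := fun m => if m = h then w else G.r m
    inv := G.inv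
    inv_involutive := G.inv_involutive
    inv_ne := G.inv_ne
    mark := G.mark
    mark_injective := G.mark_injective }

lemma move_lemma (G : MGraph n) (hG : G.IsObj g) (h k : G.H)
    (hhk : h ≠ k) (hroot : G.r h = G.r k) (hmk : G.r k ∈ Set.range G.mark)
    (hw : G.r (G.inv k) ≠ G.r k) :
    ∃ hG' : (G.moveG h (G.r (G.inv k))).IsObj g,
      Conn g n ⟨G, hG⟩ ⟨G.moveG h (G.r (G.inv k)), hG'⟩ := by
  classical
  set u := G.r k with hu
  set w := G.r (G.inv k) with hwdef
  -- basic inequalities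
  have hinvk_h : G.inv k ≠ h := by
    intro e; apply hw; rw [hwdef, e]; exact hroot
  have hinvk_k : G.inv k ≠ k := G.inv_ne k
  have hinvh_h : G.inv h ≠ h := G.inv_ne h
  have hinvh_k : G.inv h ≠ k := by
    intro e
    apply hinvk_h
    rw [← e, G.inv_involutive]
  have hkinvk : k ≠ G.inv k := fun e => hinvk_k e.symm
  set G' := G.moveG h w with hG'def
  have hr'h : G'.r h = w := by
    show (if h = h then w else G.r h) = w
    rw [if_pos rfl]
  have hr'ne : ∀ m, m ≠ h → G'.r m = G.r m := by
    intro m hm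
    show (if m = h then w else G.r m) = G.r m
    rw [if_neg hm]
  have hV' : G'.V = G.V := rfl
  have hH' : G'.H = G.H := rfl
  -- IsObj G'
  have hG'obj : G'.IsObj g := by
    refine ⟨⟨hG.1.1, ?_⟩, ?_, ?_⟩
    · -- connectivity
      have hadj_uw : G'.Adj u w := by
        refine ⟨k, hr'ne k hhk.symm ▸ rfl, ?_⟩
        show G'.r (G.inv k) = w
        rw [hr'ne _ hinvk_h]
      have hadj_wu : G'.Adj w u := by
        refine ⟨G.inv k, ?_, ?_⟩
        · rw [hr'ne _ hinvk_h]
        · show G'.r (G.inv (G.inv k)) = u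
          rw [G.inv_involutive, hr'ne k hhk.symm]
      have hstep : ∀ v z : G.V, G.Adj v z → Relation.ReflTransGen G'.Adj v z := by
        rintro v z ⟨m, hm1, hm2⟩
        by_cases hmh : m = h
        · -- v = u, z = r (inv h)
          have hv : v = u := by rw [← hm1, hmh, hroot]
          have hadj_wz : G'.Adj w z := by
            refine ⟨h, hr'h, ?_⟩
            show G'.r (G.inv h) = z
            rw [hr'ne _ hinvh_h, ← hmh, hm2]
          rw [hv]
          exact (Relation.ReflTransGen.single hadj_uw).tail hadj_wz
        · by_cases hmih : m = G.inv h
          · -- v = r (inv h), z = u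
            have hz : z = u := by
              rw [← hm2, hmih, G.inv_involutive, hroot]
            have hadj_vw : G'.Adj v w := by
              refine ⟨G.inv h, ?_, ?_⟩
              · rw [hr'ne _ hinvh_h, ← hmih, hm1]
              · show G'.r (G.inv (G.inv h)) = w
                rw [G.inv_involutive, hr'h]
            rw [hz]
            exact (Relation.ReflTransGen.single hadj_vw).tail hadj_wu
          · have him : G.inv m ≠ h := by
              intro e; apply hmih; rw [← e, G.inv_involutive]
            refine Relation.ReflTransGen.single ⟨m, ?_, ?_⟩
            · rw [hr'ne _ hmh, hm1]
            · show G'.r (G.inv m) = z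
              rw [hr'ne _ him, hm2]
      intro v z
      have hp := hG.1.2 v z
      induction hp with
      | refl => exact Relation.ReflTransGen.refl
      | tail _ h2 ih => exact ih.trans (hstep _ _ h2)
    · exact hG.2.1
    · intro v hv
      have hvu : v ≠ u := by
        intro e; rw [e] at hv; exact hv hmk
      have hF : Function.Injective
          (fun m : {m : G.H // G.r m = v} =>
            (⟨m.1, by
              have hmne : m.1 ≠ h := by
                intro e
                apply hvu
                rw [← m.2, e, hroot]
              show G'.r m.1 = v
              rw [hr'ne _ hmne]; exact m.2⟩ : {m : G'.H // G'.r m = v})) := by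
        intro x y hxy
        have h1 : (G.r x.1 : G.V) = G.r x.1 := rfl
        have h2 := congrArg (fun t : {m : G'.H // G'.r m = v} => (t.1 : G.H)) hxy
        exact Subtype.ext h2
      have hle := Nat.card_le_card_of_injective _ hF
      have h3 : 3 ≤ G.valence v := hG.2.2 v hv
      unfold MGraph.valence at h3 ⊢
      omega
  -- the expanded graph
  set Gp : MGraph n :=
    { V := Option G.V
      H := G.H ⊕ Bool
      r := fun m => match m with
        | Sum.inl m => if m = h ∨ m = k then none else some (G.r m)
        | Sum.inr true => some u
        | Sum.inr false => none
      inv := fun m => match m with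
        | Sum.inl m => Sum.inl (G.inv m)
        | Sum.inr b => Sum.inr (!b)
      inv_involutive := by
        rintro (m | b)
        · exact congrArg Sum.inl (G.inv_involutive m)
        · cases b <;> rfl
      inv_ne := by
        rintro (m | b) e
        · exact G.inv_ne m (by injection e)
        · cases b <;> simp at e
      mark := fun j => some (G.mark j)
      mark_injective := fun j l e => G.mark_injective (by injection e) } with hGp
  have hrp_h : Gp.r (Sum.inl h) = none := by
    show (if h = h ∨ h = k then none else some (G.r h)) = none
    rw [if_pos (Or.inl rfl)]
  have hrp_k : Gp.r (Sum.inl k) = none := by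
    show (if k = h ∨ k = k then none else some (G.r k)) = none
    rw [if_pos (Or.inr rfl)]
  have hrp_ne : ∀ m, m ≠ h → m ≠ k → Gp.r (Sum.inl m) = some (G.r m) := by
    intro m h1 h2
    show (if m = h ∨ m = k then none else some (G.r m)) = some (G.r m)
    rw [if_neg (by rintro (e | e) <;> [exact h1 e; exact h2 e])]
  have hrp_t : Gp.r (Sum.inr true) = some u := rfl
  have hrp_f : Gp.r (Sum.inr false) = none := rfl
  have hinvp_l : ∀ m, Gp.inv (Sum.inl m) = Sum.inl (G.inv m) := fun m => rfl
  have hinvp_t : Gp.inv (Sum.inr true) = Sum.inr false := rfl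
  have hinvp_f : Gp.inv (Sum.inr false) = Sum.inr true := rfl
  have hmarkp : ∀ j, Gp.mark j = some (G.mark j) := fun j => rfl
  have hnonemark : (none : Option G.V) ∉ Set.range Gp.mark := by
    rintro ⟨j, hj⟩
    rw [hmarkp] at hj
    exact Option.some_ne_none _ hj
  -- IsObj Gp
  have hGpobj : Gp.IsObj g := by
    refine ⟨⟨⟨none⟩, ?_⟩, ?_, ?_⟩
    · -- connectivity
      have hadj_nu : Gp.Adj none (some u) := ⟨Sum.inr false, hrp_f, hrp_t⟩
      have hadj_un : Gp.Adj (some u) none := ⟨Sum.inr true, hrp_t, hrp_f⟩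
      have hstep : ∀ v z : G.V, G.Adj v z →
          Relation.ReflTransGen Gp.Adj (some v) (some z) := by
        rintro v z ⟨m, hm1, hm2⟩
        by_cases hmh : m = h
        · have hv : v = u := by rw [← hm1, hmh, hroot]
          have h2 : Gp.Adj none (some z) := by
            refine ⟨Sum.inl h, hrp_h, ?_⟩
            rw [hinvp_l, hrp_ne _ hinvh_h hinvh_k, ← hmh, hm2]
          rw [hv]
          exact (Relation.ReflTransGen.single hadj_un).tail h2
        · by_cases hmk2 : m = k
          · have hv : v = u := by rw [← hm1, hmk2]
            have h2 : Gp.Adj none (some z) := by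
              refine ⟨Sum.inl k, hrp_k, ?_⟩
              rw [hinvp_l, hrp_ne _ hinvk_h hinvk_k, ← hmk2, hm2]
            rw [hv]
            exact (Relation.ReflTransGen.single hadj_un).tail h2
          · by_cases hmih : m = G.inv h
            · have hz : z = u := by rw [← hm2, hmih, G.inv_involutive, hroot]
              have h1 : Gp.Adj (some v) none := by
                refine ⟨Sum.inl m, ?_, ?_⟩
                · rw [hrp_ne _ hmh hmk2, hm1]
                · rw [hinvp_l, hmih, G.inv_involutive, hrp_h]
              rw [hz]
              exact (Relation.ReflTransGen.single h1).tail hadj_nu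
            · by_cases hmik : m = G.inv k
              · have hz : z = u := by rw [← hm2, hmik, G.inv_involutive]
                have h1 : Gp.Adj (some v) none := by
                  refine ⟨Sum.inl m, ?_, ?_⟩
                  · rw [hrp_ne _ hmh hmk2, hm1]
                  · rw [hinvp_l, hmik, G.inv_involutive, hrp_k]
                rw [hz]
                exact (Relation.ReflTransGen.single h1).tail hadj_nu
              · have him_h : G.inv m ≠ h := by
                  intro e; apply hmih; rw [← e, G.inv_involutive]
                have him_k : G.inv m ≠ k := by
                  intro e; apply hmik; rw [← e, G.inv_involutive]
                refine Relation.ReflTransGen.single ⟨Sum.inl m, ?_, ?_⟩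
                · rw [hrp_ne _ hmh hmk2, hm1]
                · rw [hinvp_l, hrp_ne _ him_h him_k, hm2]
      have hlift : ∀ v z : G.V, Relation.ReflTransGen G.Adj v z →
          Relation.ReflTransGen Gp.Adj (some v) (some z) := by
        intro v z hp
        induction hp with
        | refl => exact Relation.ReflTransGen.refl
        | tail _ h2 ih => exact ih.trans (hstep _ _ h2)
      rintro (_ | v) (_ | z)
      · exact Relation.ReflTransGen.refl
      · exact (Relation.ReflTransGen.single hadj_nu).trans (hlift u z (hG.1.2 u z))
      · exact (hlift v u (hG.1.2 v u)).trans (Relation.ReflTransGen.single hadj_un)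
      · exact hlift v z (hG.1.2 v z)
    · -- Euler characteristic
      have h1 : Nat.card Gp.V = Nat.card G.V + 1 := nat_card_option
      have h2 : Nat.card Gp.H = Nat.card G.H + 2 := by
        show Nat.card (G.H ⊕ Bool) = Nat.card G.H + 2
        rw [Nat.card_sum]
        simp [Nat.card_eq_fintype_card]
      have heuler := hG.2.1
      unfold MGraph.numEdges at heuler ⊢
      haveI : Nonempty G.V := hG.1.1
      have := Nat.card_pos (α := G.V)
      omega
    · -- valences
      rintro (_ | v) hv
      · -- the new vertex
        set F : Option Bool → {m : Gp.H // Gp.r m = none} := fun o =>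
          match o with
          | none => ⟨Sum.inr false, hrp_f⟩
          | some true => ⟨Sum.inl h, hrp_h⟩
          | some false => ⟨Sum.inl k, hrp_k⟩ with hFdef
        have hF : Function.Injective F := by
          rintro (_ | b1) (_ | b2) e
          · rfl
          · exfalso; cases b2
            · exact nomatch (show (Sum.inr false : G.H ⊕ Bool) = Sum.inl k from
                congrArg Subtype.val e)
            · exact nomatch (show (Sum.inr false : G.H ⊕ Bool) = Sum.inl h from
                congrArg Subtype.val e)
          · exfalso; cases b1
            · exact nomatch (show (Sum.inl k : G.H ⊕ Bool) = Sum.inr false from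
                congrArg Subtype.val e)
            · exact nomatch (show (Sum.inl h : G.H ⊕ Bool) = Sum.inr false from
                congrArg Subtype.val e)
          · cases b1 <;> cases b2
            · rfl
            · exact absurd (Sum.inl.inj (show (Sum.inl k : G.H ⊕ Bool) = Sum.inl h from
                congrArg Subtype.val e)).symm hhk
            · exact absurd (Sum.inl.inj (show (Sum.inl h : G.H ⊕ Bool) = Sum.inl k from
                congrArg Subtype.val e)) hhk
            · rfl
        have hle := Nat.card_le_card_of_injective _ hF
        have hcard3 : Nat.card (Option Bool) = 3 := by
          simp [Nat.card_eq_fintype_card]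
        show 3 ≤ Gp.valence none
        unfold MGraph.valence
        omega
      · -- old vertices
        have hv' : v ∉ Set.range G.mark := by
          rintro ⟨j, hj⟩
          exact hv ⟨j, by rw [hmarkp, hj]⟩
        have hvu : v ≠ u := by
          intro e; rw [e] at hv'; exact hv' hmk
        have hF : Function.Injective
            (fun m : {m : G.H // G.r m = v} =>
              (⟨Sum.inl m.1, by
                have h1 : m.1 ≠ h := by
                  intro e; apply hvu; rw [← m.2, e, hroot]
                have h2 : m.1 ≠ k := by
                  intro e; apply hvu; rw [← m.2, e]
                rw [hrp_ne _ h1 h2, m.2]⟩ : {m : Gp.H // Gp.r m = some v})) := by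
          intro x y e
          exact Subtype.ext (Sum.inl.inj (congrArg Subtype.val e))
        have hle := Nat.card_le_card_of_injective _ hF
        have h3 : 3 ≤ G.valence v := hG.2.2 v hv'
        show 3 ≤ Gp.valence (some v)
        unfold MGraph.valence at h3 ⊢
        omega
  -- first collapse: Gp collapses to G
  have hcoll1 : Gp.IsElemCollapse G := by
    refine ⟨Sum.inr false, ?_, ?_, fun ov => ov.getD u,
      fun x => Sum.elim id (fun _ => h) x.1, ?_, ?_, ?_, ?_, ?_, ?_, ?_⟩
    · rw [hrp_f, hinvp_f, hrp_t]; exact fun e => nomatch e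
    · rintro ⟨hc, _⟩
      rw [hrp_f] at hc
      exact hnonemark hc
    · intro v; exact ⟨some v, rfl⟩
    · constructor
      · rintro ⟨(m1 | b1), hx⟩ ⟨(m2 | b2), hy⟩ e
        · exact Subtype.ext (congrArg Sum.inl e)
        · exfalso; cases b2
          · exact hy.1 rfl
          · exact hy.2 (by rw [hinvp_f])
        · exfalso; cases b1
          · exact hx.1 rfl
          · exact hx.2 (by rw [hinvp_f])
        · exfalso; cases b1
          · exact hx.1 rfl
          · exact hx.2 (by rw [hinvp_f])
      · intro m
        refine ⟨⟨Sum.inl m, fun e => Sum.inl_ne_inr e, fun e => ?_⟩, rfl⟩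
        rw [hinvp_f] at e
        exact nomatch e
    · rw [hrp_f, hinvp_f, hrp_t]; rfl
    · rintro (_ | x) (_ | y) e
      · exact Or.inl rfl
      · rw [hrp_f, hinvp_f, hrp_t]
        refine Or.inr (Or.inl ⟨rfl, ?_⟩)
        show some y = some u
        rw [show y = u from e.symm]
      · rw [hrp_f, hinvp_f, hrp_t]
        refine Or.inr (Or.inr ⟨?_, rfl⟩)
        show some x = some u
        rw [show x = u from e]
      · exact Or.inl (congrArg some (show x = y from e))
    · rintro ⟨(m | b), hx⟩
      · show G.r m = (Gp.r (Sum.inl m)).getD u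
        by_cases h1 : m = h
        · rw [h1, hrp_h, hroot]; rfl
        · by_cases h2 : m = k
          · rw [h2, hrp_k]; rfl
          · rw [hrp_ne _ h1 h2]; rfl
      · exfalso; cases b
        · exact hx.1 rfl
        · exact hx.2 (by rw [hinvp_f])
    · rintro ⟨(m1 | b1), hx⟩ ⟨(m2 | b2), hy⟩ e
      · show G.inv m1 = m2
        rw [hinvp_l] at e
        exact Sum.inl.inj e
      · exfalso; cases b2
        · exact hy.1 rfl
        · exact hy.2 (by rw [hinvp_f])
      · exfalso; cases b1
        · exact hx.1 rfl
        · exact hx.2 (by rw [hinvp_f])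
      · exfalso; cases b1
        · exact hx.1 rfl
        · exact hx.2 (by rw [hinvp_f])
    · intro j; rfl
  -- second collapse: Gp collapses to G'
  have hcoll2 : Gp.IsElemCollapse G' := by
    refine ⟨Sum.inl k, ?_, ?_, fun ov => ov.getD w,
      fun x => Sum.elim id (fun b => cond b k (G.inv k)) x.1, ?_, ?_, ?_, ?_, ?_, ?_, ?_⟩
    · rw [hrp_k, hinvp_l, hrp_ne _ hinvk_h hinvk_k]
      exact fun e => nomatch e
    · rintro ⟨hc, _⟩
      rw [hrp_k] at hc
      exact hnonemark hc
    · intro v; exact ⟨some v, rfl⟩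
    · constructor
      · rintro ⟨(m1 | b1), hx⟩ ⟨(m2 | b2), hy⟩ e
        · exact Subtype.ext (congrArg Sum.inl (show m1 = m2 from e))
        · exfalso; cases b2
          · exact hx.2 (congrArg Sum.inl (show m1 = G.inv k from e))
          · exact hx.1 (congrArg Sum.inl (show m1 = k from e))
        · exfalso; cases b1
          · exact hy.2 (congrArg Sum.inl (show m2 = G.inv k from e.symm))
          · exact hy.1 (congrArg Sum.inl (show m2 = k from e.symm))
        · cases b1 <;> cases b2
          · rfl
          · exact absurd (show G.inv k = k from e) hinvk_k
          · exact absurd (show k = G.inv k from e) hkinvk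
          · rfl
      · intro m
        by_cases h1 : m = k
        · refine ⟨⟨Sum.inr true, fun e => Sum.inr_ne_inl e, ?_⟩, h1.symm⟩
          rw [hinvp_l]; exact fun e => nomatch e
        · by_cases h2 : m = G.inv k
          · refine ⟨⟨Sum.inr false, fun e => Sum.inr_ne_inl e, ?_⟩, h2.symm⟩
            rw [hinvp_l]; exact fun e => nomatch e
          · refine ⟨⟨Sum.inl m, fun e => h1 (Sum.inl.inj e), fun e => ?_⟩, rfl⟩
            rw [hinvp_l] at e
            exact h2 (Sum.inl.inj e)
    · rw [hrp_k, hinvp_l, hrp_ne _ hinvk_h hinvk_k]; rfl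
    · rintro (_ | x) (_ | y) e
      · exact Or.inl rfl
      · rw [hrp_k, hinvp_l, hrp_ne _ hinvk_h hinvk_k]
        refine Or.inr (Or.inl ⟨rfl, ?_⟩)
        show some y = some w
        rw [show y = w from e.symm]
      · rw [hrp_k, hinvp_l, hrp_ne _ hinvk_h hinvk_k]
        refine Or.inr (Or.inr ⟨?_, rfl⟩)
        show some x = some w
        rw [show x = w from e]
      · exact Or.inl (congrArg some (show x = y from e))
    · rintro ⟨(m | b), hx⟩
      · show G'.r m = (Gp.r (Sum.inl m)).getD w
        by_cases h1 : m = h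
        · rw [h1, hrp_h, hr'h]; rfl
        · have h2 : m ≠ k := fun e => hx.1 (congrArg Sum.inl e)
          rw [hrp_ne _ h1 h2, hr'ne _ h1]; rfl
      · cases b
        · show G'.r (G.inv k) = (Gp.r (Sum.inr false)).getD w
          rw [hr'ne _ hinvk_h, hrp_f]; rfl
        · show G'.r k = (Gp.r (Sum.inr true)).getD w
          rw [hr'ne _ hhk.symm, hrp_t]; rfl
    · rintro ⟨(m1 | b1), hx⟩ ⟨(m2 | b2), hy⟩ e
      · show G.inv m1 = m2
        exact Sum.inl.inj (show Sum.inl (G.inv m1) = Sum.inl m2 from e)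
      · exact absurd (show Sum.inl (G.inv m1) = Sum.inr b2 from e) (fun e => nomatch e)
      · exact absurd (show Sum.inr (!b1) = Sum.inl m2 from e) (fun e => nomatch e)
      · have hb : b2 = !b1 := (Sum.inr.inj (show Sum.inr (!b1) = Sum.inr b2 from e)).symm
        cases b1
        · subst hb
          show G.inv (G.inv k) = k
          exact G.inv_involutive k
        · subst hb
          show G.inv k = G.inv k
          rfl
    · intro j; rfl
  -- conclude
  refine ⟨hG'obj, ?_⟩
  have step1 : RRel g n ⟨G, hG⟩ ⟨Gp, hGpobj⟩ := Or.inr (Or.inr hcoll1)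
  have step2 : RRel g n ⟨Gp, hGpobj⟩ ⟨G', hG'obj⟩ := Or.inr (Or.inl hcoll2)
  exact (Relation.ReflTransGen.single step1).tail step2

end MGraph
namespace MGraph

variable {g n : ℕ}

lemma crossing (G : MGraph n) (S : Set G.V) {v w : G.V}
    (hp : Relation.ReflTransGen G.Adj v w) (hv : v ∈ S) (hw : w ∉ S) :
    ∃ j, G.r j ∈ S ∧ G.r (G.inv j) ∉ S := by
  induction hp with
  | refl => exact absurd hv hw
  | @tail b c _ h2 ih =>
    by_cases hb : b ∈ S
    · obtain ⟨j, hj1, hj2⟩ := h2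
      exact ⟨j, hj1 ▸ hb, hj2 ▸ hw⟩
    · exact ih hb

lemma phaseA (i0 : Fin n) : ∀ (N : ℕ) (G : MGraph n) (hG : G.IsObj g),
    (∀ v : G.V, v ∈ Set.range G.mark) →
    Nat.card {v : G.V // v ≠ G.mark i0 ∧ ¬ G.Adj (G.mark i0) v} ≤ N →
    ∃ (G' : MGraph n) (hG' : G'.IsObj g), Conn g n ⟨G, hG⟩ ⟨G', hG'⟩ ∧
      (∀ v : G'.V, v ∈ Set.range G'.mark) ∧
      (∀ v : G'.V, v ≠ G'.mark i0 → G'.Adj (G'.mark i0) v) := by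
  intro N
  induction N with
  | zero =>
    intro G hG hall hcard
    by_cases hdone : ∀ v : G.V, v ≠ G.mark i0 → G.Adj (G.mark i0) v
    · exact ⟨G, hG, Relation.ReflTransGen.refl, hall, hdone⟩
    · exfalso
      push_neg at hdone
      obtain ⟨v', hv1, hv2⟩ := hdone
      haveI : Nonempty {v : G.V // v ≠ G.mark i0 ∧ ¬ G.Adj (G.mark i0) v} := ⟨⟨v', hv1, hv2⟩⟩
      have := Nat.card_pos (α := {v : G.V // v ≠ G.mark i0 ∧ ¬ G.Adj (G.mark i0) v})
      omega
  | succ N ih =>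
    intro G hG hall hcard
    classical
    by_cases hdone : ∀ v : G.V, v ≠ G.mark i0 → G.Adj (G.mark i0) v
    · exact ⟨G, hG, Relation.ReflTransGen.refl, hall, hdone⟩
    push_neg at hdone
    obtain ⟨v', hv1, hv2⟩ := hdone
    set m0 := G.mark i0 with hm0def
    set S : Set G.V := {z | z = m0 ∨ G.Adj m0 z} with hSdef
    have hv'S : v' ∉ S := by
      rintro (h | h)
      · exact hv1 h
      · exact hv2 h
    have hm0S : m0 ∈ S := Or.inl rfl
    obtain ⟨j, hjS, hjnS⟩ := G.crossing S (hG.1.2 m0 v') hm0S hv'S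
    have hju : G.r j ≠ m0 := by
      intro e
      exact hjnS (Or.inr ⟨j, e, rfl⟩)
    have hadj : G.Adj m0 (G.r j) := hjS.resolve_left hju
    obtain ⟨m, hm1, hm2⟩ := hadj
    set k := G.inv m with hkdef
    have hrk : G.r k = G.r j := hm2
    have hrik : G.r (G.inv k) = m0 := by
      rw [hkdef, G.inv_involutive, hm1]
    have hjk : j ≠ k := by
      intro e
      apply hjnS
      rw [e, hrik]
      exact hm0S
    have hwne : G.r (G.inv k) ≠ G.r k := by
      rw [hrik, hrk]
      exact fun e => hju e.symm
    obtain ⟨hG₁, hconn₁⟩ := G.move_lemma hG j k hjk hrk.symm (hrk ▸ hall (G.r j)) hwne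
    set G₁ := G.moveG j (G.r (G.inv k)) with hG₁def
    have hr₁j : G₁.r j = m0 := by
      show (if j = j then G.r (G.inv k) else G.r j) = m0
      rw [if_pos rfl, hrik]
    have hr₁ne : ∀ m', m' ≠ j → G₁.r m' = G.r m' := by
      intro m' hm'
      show (if m' = j then G.r (G.inv k) else G.r m') = G.r m'
      rw [if_neg hm']
    -- old adjacencies to m0 are preserved
    have hpres : ∀ z : G.V, G.Adj m0 z → G₁.Adj m0 z := by
      rintro z ⟨m', h1, h2⟩
      have hm'j : m' ≠ j := by
        intro e
        apply hju
        rw [← e, h1]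
      have him'j : G.inv m' ≠ j := by
        intro e
        apply hjnS
        have hm'e : m' = G.inv j := by rw [← e, G.inv_involutive]
        have hrij : G.r (G.inv j) = m0 := by rw [← hm'e, h1]
        rw [hrij]
        exact hm0S
      exact ⟨m', by rw [hr₁ne _ hm'j, h1], by
        show G₁.r (G.inv m') = z
        rw [hr₁ne _ him'j, h2]⟩
    -- the new adjacency
    set z' := G.r (G.inv j) with hz'def
    have hz'm0 : z' ≠ m0 := fun e => hjnS (Or.inl e)
    have hz'nadj : ¬ G.Adj m0 z' := fun a => hjnS (Or.inr a)
    have hnew : G₁.Adj m0 z' := by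
      refine ⟨j, hr₁j, ?_⟩
      show G₁.r (G.inv j) = z'
      rw [hr₁ne _ (G.inv_ne j)]
    -- cardinality decrease
    set Bad1 : Set G.V := {z | z ≠ m0 ∧ ¬ G₁.Adj m0 z} with hBad1
    set Bad0 : Set G.V := {z | z ≠ m0 ∧ ¬ G.Adj m0 z} with hBad0
    have hsub : Bad1 ⊆ Bad0 := fun z hz => ⟨hz.1, fun a => hz.2 (hpres z a)⟩
    have hss : Bad1 ⊂ Bad0 :=
      (Set.ssubset_iff_of_subset hsub).2 ⟨z', ⟨hz'm0, hz'nadj⟩, fun hz => hz.2 hnew⟩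
    have hlt : Nat.card ↥Bad1 < Nat.card ↥Bad0 := by
      rw [Nat.card_coe_set_eq, Nat.card_coe_set_eq]
      exact Set.ncard_lt_ncard hss (Set.toFinite _)
    have hcard0 : Nat.card ↥Bad0 = Nat.card {v : G.V // v ≠ m0 ∧ ¬ G.Adj m0 v} := rfl
    have hcard1 : Nat.card {v : G₁.V // v ≠ G₁.mark i0 ∧ ¬ G₁.Adj (G₁.mark i0) v}
        = Nat.card ↥Bad1 := rfl
    have hall₁ : ∀ v : G₁.V, v ∈ Set.range G₁.mark := hall
    obtain ⟨G', hG', hconn', hall', hdone'⟩ := ih G₁ hG₁ hall₁ (by omega)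
    exact ⟨G', hG', hconn₁.trans hconn', hall', hdone'⟩

lemma phaseB (i0 : Fin n) : ∀ (N : ℕ) (G : MGraph n) (hG : G.IsObj g),
    (∀ v : G.V, v ∈ Set.range G.mark) →
    (∀ v : G.V, v ≠ G.mark i0 → G.Adj (G.mark i0) v) →
    Nat.card {m : G.H // G.r m ≠ G.mark i0} ≤ N →
    ∃ (G' : MGraph n) (hG' : G'.IsObj g), Conn g n ⟨G, hG⟩ ⟨G', hG'⟩ ∧
      (∀ v : G'.V, v ∈ Set.range G'.mark) ∧
      (∀ h k : G'.H, G'.r h = G'.r k → G'.r h ≠ G'.mark i0 → h = k) := by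
  intro N
  induction N with
  | zero =>
    intro G hG hall hadj hcard
    by_cases hdone : ∀ h k : G.H, G.r h = G.r k → G.r h ≠ G.mark i0 → h = k
    · exact ⟨G, hG, Relation.ReflTransGen.refl, hall, hdone⟩
    · exfalso
      push_neg at hdone
      obtain ⟨h, k, he, hne, hhk⟩ := hdone
      haveI : Nonempty {m : G.H // G.r m ≠ G.mark i0} := ⟨⟨h, hne⟩⟩
      have := Nat.card_pos (α := {m : G.H // G.r m ≠ G.mark i0})
      omega
  | succ N ih =>
    intro G hG hall hadj hcard
    classical
    by_cases hdone : ∀ h k : G.H, G.r h = G.r k → G.r h ≠ G.mark i0 → h = k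
    · exact ⟨G, hG, Relation.ReflTransGen.refl, hall, hdone⟩
    push_neg at hdone
    obtain ⟨h, k, he, hne, hhk⟩ := hdone
    set m0 := G.mark i0 with hm0def
    -- u' is the common root, not m0
    set u' := G.r h with hu'def
    obtain ⟨m, hm1, hm2⟩ := hadj u' hne
    set k₂ := G.inv m with hk₂def
    have hrk₂ : G.r k₂ = u' := hm2
    have hrik₂ : G.r (G.inv k₂) = m0 := by
      rw [hk₂def, G.inv_involutive, hm1]
    -- choose h₂ at u' distinct from k₂
    have hchoice : ∃ h₂ : G.H, h₂ ≠ k₂ ∧ G.r h₂ = u' := by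
      by_cases hc : h = k₂
      · exact ⟨k, fun e => hhk (hc ▸ e ▸ rfl), he.symm⟩
      · exact ⟨h, hc, rfl⟩
    obtain ⟨h₂, hh₂k₂, hrh₂⟩ := hchoice
    have hwne : G.r (G.inv k₂) ≠ G.r k₂ := by
      rw [hrik₂, hrk₂]
      exact fun e => hne e.symm
    have hroot2 : G.r h₂ = G.r k₂ := by rw [hrh₂, hrk₂]
    obtain ⟨hG₁, hconn₁⟩ := G.move_lemma hG h₂ k₂ hh₂k₂ hroot2 (hrk₂ ▸ hall u') hwne
    set G₁ := G.moveG h₂ (G.r (G.inv k₂)) with hG₁def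
    have hr₁h₂ : G₁.r h₂ = m0 := by
      show (if h₂ = h₂ then G.r (G.inv k₂) else G.r h₂) = m0
      rw [if_pos rfl, hrik₂]
    have hr₁ne : ∀ m', m' ≠ h₂ → G₁.r m' = G.r m' := by
      intro m' hm'
      show (if m' = h₂ then G.r (G.inv k₂) else G.r m') = G.r m'
      rw [if_neg hm']
    have hik₂h₂ : G.inv k₂ ≠ h₂ := by
      intro e
      apply hwne
      rw [e, hroot2]
    have hk₂h₂ : k₂ ≠ h₂ := fun e => hh₂k₂ e.symm
    -- adjacency to m0 is preserved
    have hadj₁ : ∀ z : G₁.V, z ≠ G₁.mark i0 → G₁.Adj (G₁.mark i0) z := by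
      intro z hz
      obtain ⟨m', h1, h2⟩ := hadj z hz
      by_cases him : G.inv m' = h₂
      · -- the old edge witnessing adjacency of z was the moved one: z = u'
        have hzu : z = u' := by
          rw [← h2, him, hrh₂]
        refine ⟨G.inv k₂, ?_, ?_⟩
        · show G₁.r (G.inv k₂) = m0
          rw [hr₁ne _ hik₂h₂, hrik₂]
        · show G₁.r (G₁.inv (G.inv k₂)) = z
          show G₁.r (G.inv (G.inv k₂)) = z
          rw [G.inv_involutive, hr₁ne _ hk₂h₂, hrk₂, hzu]
      · have hm'h₂ : m' ≠ h₂ := by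
          intro e
          apply hne
          rw [← hrh₂, ← e]
          exact h1
        refine ⟨m', ?_, ?_⟩
        · show G₁.r m' = m0
          rw [hr₁ne _ hm'h₂, h1]
        · show G₁.r (G.inv m') = z
          rw [hr₁ne _ him, h2]
    -- cardinality decrease
    set Bad1 : Set G.H := {m' | G₁.r m' ≠ m0} with hBad1
    set Bad0 : Set G.H := {m' | G.r m' ≠ m0} with hBad0
    have hsub : Bad1 ⊆ Bad0 := by
      intro m' hm'
      by_cases hc : m' = h₂
      · exfalso
        apply hm'
        rw [hc, hr₁h₂]
      · show G.r m' ≠ m0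
        rw [← hr₁ne _ hc]
        exact hm'
    have hh₂0 : h₂ ∈ Bad0 := by
      show G.r h₂ ≠ m0
      rw [hrh₂]
      exact hne
    have hh₂1 : h₂ ∉ Bad1 := by
      intro hc
      exact hc hr₁h₂
    have hss : Bad1 ⊂ Bad0 := (Set.ssubset_iff_of_subset hsub).2 ⟨h₂, hh₂0, hh₂1⟩
    have hlt : Nat.card ↥Bad1 < Nat.card ↥Bad0 := by
      rw [Nat.card_coe_set_eq, Nat.card_coe_set_eq]
      exact Set.ncard_lt_ncard hss (Set.toFinite _)
    have hcard0 : Nat.card ↥Bad0 = Nat.card {m : G.H // G.r m ≠ m0} := rfl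
    have hcard1 : Nat.card {m : G₁.H // G₁.r m ≠ G₁.mark i0} = Nat.card ↥Bad1 := rfl
    have hall₁ : ∀ v : G₁.V, v ∈ Set.range G₁.mark := hall
    obtain ⟨G', hG', hconn', hall', hdone'⟩ := ih G₁ hG₁ hall₁ hadj₁ (by omega)
    exact ⟨G', hG', hconn₁.trans hconn', hall', hdone'⟩

end MGraph
namespace MGraph

variable {g n : ℕ}

lemma reduced_all_marked (G : MGraph n) (hG : G.IsObj g) (hred : Reduced G) (hn : 0 < n) :
    ∀ v : G.V, v ∈ Set.range G.mark := by
  intro v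
  by_contra hv
  have hloops : ∀ h, G.r h = v → G.r (G.inv h) = v := by
    intro h hh
    by_contra hl
    have hne : G.r h ≠ G.r (G.inv h) := fun e => hl (by rw [← e, hh])
    exact hv (hh ▸ (hred h hne).1)
  have hall := G.loops_only hG.1 v hloops
  exact hv ⟨⟨0, hn⟩, hall (G.mark ⟨0, hn⟩)⟩

lemma root_exists (G : MGraph n) (hG : G.IsObj g) (v w : G.V) (hvw : w ≠ v) :
    ∃ h, G.r h = w := by
  rcases (hG.1.2 v w).cases_tail with h | ⟨c, _, hc⟩
  · exact absurd h hvw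
  · obtain ⟨m, _, hm2⟩ := hc
    exact ⟨G.inv m, hm2⟩

lemma partner_root (G : MGraph n) (hG : G.IsObj g) (m0 : G.V)
    (hu : ∀ h k, G.r h = G.r k → G.r h ≠ m0 → h = k) (h : G.H) (hh : G.r h ≠ m0) :
    G.r (G.inv h) = m0 := by
  by_contra hz
  have hT : ∀ x y, G.Adj x y → (y = G.r h ∨ y = G.r (G.inv h)) →
      (x = G.r h ∨ x = G.r (G.inv h)) := by
    rintro x y ⟨m, hm1, hm2⟩ (rfl | rfl)
    · have he : G.inv m = h := hu (G.inv m) h hm2 (by rw [hm2]; exact hh)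
      right
      rw [← hm1, ← G.inv_involutive m, he]
    · have he : G.inv m = G.inv h := hu _ _ hm2 (by rw [hm2]; exact hz)
      have hmh : m = h := by
        have := congrArg G.inv he
        rwa [G.inv_involutive, G.inv_involutive] at this
      left
      rw [← hm1, hmh]
  have hcl : ∀ x y, Relation.ReflTransGen G.Adj x y →
      (y = G.r h ∨ y = G.r (G.inv h)) → (x = G.r h ∨ x = G.r (G.inv h)) := by
    intro x y hp
    induction hp with
    | refl => exact id
    | tail _ h2 ih => exact fun hy => ih (hT _ _ h2 hy)
  rcases hcl m0 (G.r h) (hG.1.2 m0 (G.r h)) (Or.inl rfl) with he | he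
  · exact hh he.symm
  · exact hz he.symm

end MGraph
namespace MGraph

variable {g n : ℕ}

lemma canonical_miso (i0 : Fin n) (G G' : MGraph n) (hG : G.IsObj g) (hG' : G'.IsObj g)
    (hallG : ∀ v : G.V, v ∈ Set.range G.mark) (hallG' : ∀ v : G'.V, v ∈ Set.range G'.mark)
    (huG : ∀ h k, G.r h = G.r k → G.r h ≠ G.mark i0 → h = k)
    (huG' : ∀ h k, G'.r h = G'.r k → G'.r h ≠ G'.mark i0 → h = k) :
    G.MIso G' := by
  classical
  set m0 := G.mark i0 with hm0def
  set m0' := G'.mark i0 with hm0'def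
  -- vertex equivalence
  have hbijG : Function.Bijective G.mark := ⟨G.mark_injective, hallG⟩
  have hbijG' : Function.Bijective G'.mark := ⟨G'.mark_injective, hallG'⟩
  set eMG : Fin n ≃ G.V := Equiv.ofBijective _ hbijG with heMG
  set eMG' : Fin n ≃ G'.V := Equiv.ofBijective _ hbijG' with heMG'
  set eV : G.V ≃ G'.V := eMG.symm.trans eMG' with heV
  have heVmark : ∀ k, eV (G.mark k) = G'.mark k := by
    intro k
    show eMG' (eMG.symm (G.mark k)) = G'.mark k
    have h1 : G.mark k = eMG k := rfl
    rw [h1, Equiv.symm_apply_apply]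
    rfl
  have heVm0 : eV m0 = m0' := heVmark i0
  have heVne : ∀ v : G.V, v ≠ m0 → eV v ≠ m0' :=
    fun v hv e => hv (eV.injective (by rw [e, heVm0]))
  have heV'ne : ∀ v' : G'.V, v' ≠ m0' → eV.symm v' ≠ m0 := by
    intro v' hv' e
    apply hv'
    rw [← heVm0, ← e, Equiv.apply_symm_apply]
  -- choice of a half-edge rooted at a given vertex
  have hexG : ∀ v : G.V, v ≠ m0 → ∃ h, G.r h = v :=
    fun v hv => G.root_exists hG m0 v hv
  have hexG' : ∀ v' : G'.V, v' ≠ m0' → ∃ h, G'.r h = v' :=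
    fun v hv => G'.root_exists hG' m0' v hv
  choose outG houtG using hexG
  choose outG' houtG' using hexG'
  -- the three classes of half-edges
  set A := {m : G.H // G.r m ≠ m0} with hA
  set B := {m : G.H // G.r m = m0 ∧ G.r (G.inv m) ≠ m0} with hB
  set C := {m : G.H // G.r m = m0 ∧ G.r (G.inv m) = m0} with hC
  set A' := {m : G'.H // G'.r m ≠ m0'} with hA'
  set B' := {m : G'.H // G'.r m = m0' ∧ G'.r (G'.inv m) ≠ m0'} with hB'
  set C' := {m : G'.H // G'.r m = m0' ∧ G'.r (G'.inv m) = m0'} with hC'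
  -- the equivalence on outer half-edges
  set eA : A ≃ A' :=
    { toFun := fun x => ⟨outG' (eV (G.r x.1)) (heVne _ x.2), by
        simp only [houtG']; exact heVne _ x.2⟩
      invFun := fun y => ⟨outG (eV.symm (G'.r y.1)) (heV'ne _ y.2), by
        simp only [houtG]; exact heV'ne _ y.2⟩
      left_inv := by
        intro x
        apply Subtype.ext
        refine huG _ x.1 ?_ ?_
        · simp only [houtG, houtG', Equiv.symm_apply_apply]
        · simp only [houtG, houtG', Equiv.symm_apply_apply]
          exact x.2
      right_inv := by
        intro y
        apply Subtype.ext
        refine huG' _ y.1 ?_ ?_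
        · simp only [houtG', houtG, Equiv.apply_symm_apply]
        · simp only [houtG', houtG, Equiv.apply_symm_apply]
          exact y.2 } with heAdef
  have heA : ∀ x : A, G'.r (eA x).1 = eV (G.r x.1) := fun x => houtG' _ _
  -- B is equivalent to A by taking the partner
  set iBA : B ≃ A :=
    { toFun := fun x => ⟨G.inv x.1, x.2.2⟩
      invFun := fun a => ⟨G.inv a.1, G.partner_root hG m0 huG a.1 a.2, by
        rw [G.inv_involutive]; exact a.2⟩
      left_inv := fun x => Subtype.ext (G.inv_involutive x.1)
      right_inv := fun a => Subtype.ext (G.inv_involutive a.1) } with hiBA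
  set iB'A' : B' ≃ A' :=
    { toFun := fun x => ⟨G'.inv x.1, x.2.2⟩
      invFun := fun a => ⟨G'.inv a.1, G'.partner_root hG' m0' huG' a.1 a.2, by
        rw [G'.inv_involutive]; exact a.2⟩
      left_inv := fun x => Subtype.ext (G'.inv_involutive x.1)
      right_inv := fun a => Subtype.ext (G'.inv_involutive a.1) } with hiB'A'
  set eB : B ≃ B' := (iBA.trans eA).trans iB'A'.symm with heBdef
  have heBval : ∀ x : B, (eB x).1 = G'.inv (eA (iBA x)).1 := fun x => rfl
  -- the involutions restricted to loops at the base point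
  set iC : C → C := fun x => ⟨G.inv x.1, x.2.2, by rw [G.inv_involutive]; exact x.2.1⟩
    with hiC
  set iC' : C' → C' := fun x => ⟨G'.inv x.1, x.2.2, by rw [G'.inv_involutive]; exact x.2.1⟩
    with hiC'
  -- partitions
  set φ : A ⊕ (B ⊕ C) → G.H := Sum.elim Subtype.val (Sum.elim Subtype.val Subtype.val)
    with hφ
  set φ' : A' ⊕ (B' ⊕ C') → G'.H := Sum.elim Subtype.val (Sum.elim Subtype.val Subtype.val)
    with hφ'
  have hφbij : Function.Bijective φ := by
    constructor
    · rintro (x | (x | x)) (y | (y | y)) e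
      · exact congrArg Sum.inl (Subtype.ext (show (x.1 : G.H) = y.1 from e))
      · exact absurd ((show (x.1 : G.H) = y.1 from e) ▸ y.2.1) x.2
      · exact absurd ((show (x.1 : G.H) = y.1 from e) ▸ y.2.1) x.2
      · exact absurd ((show (x.1 : G.H) = y.1 from e).symm ▸ x.2.1) y.2
      · exact congrArg (Sum.inr ∘ Sum.inl) (Subtype.ext (show (x.1 : G.H) = y.1 from e))
      · exact absurd ((show (x.1 : G.H) = y.1 from e) ▸ y.2.2) x.2.2
      · exact absurd ((show (x.1 : G.H) = y.1 from e).symm ▸ x.2.1) y.2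
      · exact absurd ((show (x.1 : G.H) = y.1 from e).symm ▸ x.2.2) y.2.2
      · exact congrArg (Sum.inr ∘ Sum.inr) (Subtype.ext (show (x.1 : G.H) = y.1 from e))
    · intro m
      by_cases h1 : G.r m ≠ m0
      · exact ⟨Sum.inl ⟨m, h1⟩, rfl⟩
      · by_cases h2 : G.r (G.inv m) ≠ m0
        · exact ⟨Sum.inr (Sum.inl ⟨m, not_not.1 h1, h2⟩), rfl⟩
        · exact ⟨Sum.inr (Sum.inr ⟨m, not_not.1 h1, not_not.1 h2⟩), rfl⟩
  have hφ'bij : Function.Bijective φ' := by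
    constructor
    · rintro (x | (x | x)) (y | (y | y)) e
      · exact congrArg Sum.inl (Subtype.ext (show (x.1 : G'.H) = y.1 from e))
      · exact absurd ((show (x.1 : G'.H) = y.1 from e) ▸ y.2.1) x.2
      · exact absurd ((show (x.1 : G'.H) = y.1 from e) ▸ y.2.1) x.2
      · exact absurd ((show (x.1 : G'.H) = y.1 from e).symm ▸ x.2.1) y.2
      · exact congrArg (Sum.inr ∘ Sum.inl) (Subtype.ext (show (x.1 : G'.H) = y.1 from e))
      · exact absurd ((show (x.1 : G'.H) = y.1 from e) ▸ y.2.2) x.2.2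
      · exact absurd ((show (x.1 : G'.H) = y.1 from e).symm ▸ x.2.1) y.2
      · exact absurd ((show (x.1 : G'.H) = y.1 from e).symm ▸ x.2.2) y.2.2
      · exact congrArg (Sum.inr ∘ Sum.inr) (Subtype.ext (show (x.1 : G'.H) = y.1 from e))
    · intro m
      by_cases h1 : G'.r m ≠ m0'
      · exact ⟨Sum.inl ⟨m, h1⟩, rfl⟩
      · by_cases h2 : G'.r (G'.inv m) ≠ m0'
        · exact ⟨Sum.inr (Sum.inl ⟨m, not_not.1 h1, h2⟩), rfl⟩
        · exact ⟨Sum.inr (Sum.inr ⟨m, not_not.1 h1, not_not.1 h2⟩), rfl⟩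
  set P : (A ⊕ (B ⊕ C)) ≃ G.H := Equiv.ofBijective φ hφbij with hP
  set P' : (A' ⊕ (B' ⊕ C')) ≃ G'.H := Equiv.ofBijective φ' hφ'bij with hP'
  -- cardinalities
  have hcardA : Nat.card A = Nat.card A' := Nat.card_congr eA
  have hcardB : Nat.card B = Nat.card B' := Nat.card_congr eB
  have hcardHsum : Nat.card G.H = Nat.card A + (Nat.card B + Nat.card C) := by
    rw [← Nat.card_congr P, Nat.card_sum, Nat.card_sum]
  have hcardHsum' : Nat.card G'.H = Nat.card A' + (Nat.card B' + Nat.card C') := by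
    rw [← Nat.card_congr P', Nat.card_sum, Nat.card_sum]
  have hcardV : Nat.card G.V = n := by
    rw [← Nat.card_congr eMG, Nat.card_eq_fintype_card, Fintype.card_fin]
  have hcardV' : Nat.card G'.V = n := by
    rw [← Nat.card_congr eMG', Nat.card_eq_fintype_card, Fintype.card_fin]
  obtain ⟨c, hc⟩ := even_card_of_fpf G.inv G.inv_involutive G.inv_ne
  obtain ⟨c', hc'⟩ := even_card_of_fpf G'.inv G'.inv_involutive G'.inv_ne
  have heu := hG.2.1
  have heu' := hG'.2.1
  unfold MGraph.numEdges at heu heu'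
  have hcardH : Nat.card G.H = Nat.card G'.H := by omega
  have hcardC : Nat.card C = Nat.card C' := by omega
  obtain ⟨eC, heC⟩ := fpf_conj (Nat.card C) C C' iC iC'
    (fun x => Subtype.ext (G.inv_involutive x.1))
    (fun x e => G.inv_ne x.1 (congrArg Subtype.val e))
    (fun x => Subtype.ext (G'.inv_involutive x.1))
    (fun x e => G'.inv_ne x.1 (congrArg Subtype.val e))
    rfl hcardC.symm
  -- assemble the half-edge equivalence
  set eS : (A ⊕ (B ⊕ C)) ≃ (A' ⊕ (B' ⊕ C')) := eA.sumCongr (eB.sumCongr eC) with heS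
  set eH : G.H ≃ G'.H := (P.symm.trans eS).trans P' with heH
  have hPsymmA : ∀ (m : G.H) (hm : G.r m ≠ m0), P.symm m = Sum.inl ⟨m, hm⟩ := by
    intro m hm
    apply P.injective
    rw [Equiv.apply_symm_apply]
    rfl
  have hPsymmB : ∀ (m : G.H) (hm1 : G.r m = m0) (hm2 : G.r (G.inv m) ≠ m0),
      P.symm m = Sum.inr (Sum.inl ⟨m, hm1, hm2⟩) := by
    intro m hm1 hm2
    apply P.injective
    rw [Equiv.apply_symm_apply]
    rfl
  have hPsymmC : ∀ (m : G.H) (hm1 : G.r m = m0) (hm2 : G.r (G.inv m) = m0),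
      P.symm m = Sum.inr (Sum.inr ⟨m, hm1, hm2⟩) := by
    intro m hm1 hm2
    apply P.injective
    rw [Equiv.apply_symm_apply]
    rfl
  have heHA : ∀ (m : G.H) (hm : G.r m ≠ m0), eH m = (eA ⟨m, hm⟩).1 := by
    intro m hm
    show P' (eS (P.symm m)) = _
    rw [hPsymmA m hm]
    rfl
  have heHB : ∀ (m : G.H) (hm1 : G.r m = m0) (hm2 : G.r (G.inv m) ≠ m0),
      eH m = (eB ⟨m, hm1, hm2⟩).1 := by
    intro m hm1 hm2
    show P' (eS (P.symm m)) = _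
    rw [hPsymmB m hm1 hm2]
    rfl
  have heHC : ∀ (m : G.H) (hm1 : G.r m = m0) (hm2 : G.r (G.inv m) = m0),
      eH m = (eC ⟨m, hm1, hm2⟩).1 := by
    intro m hm1 hm2
    show P' (eS (P.symm m)) = _
    rw [hPsymmC m hm1 hm2]
    rfl
  refine ⟨eV, eH, ?_, ?_, heVmark⟩
  · -- root compatibility
    intro m
    by_cases h1 : G.r m ≠ m0
    · rw [heHA m h1, heA ⟨m, h1⟩]
    · have h1' : G.r m = m0 := not_not.1 h1
      by_cases h2 : G.r (G.inv m) ≠ m0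
      · rw [heHB m h1' h2, heBval,
          G'.partner_root hG' m0' huG' _ ((eA (iBA ⟨m, h1', h2⟩)).2), h1', heVm0]
      · have h2' : G.r (G.inv m) = m0 := not_not.1 h2
        rw [heHC m h1' h2', (eC ⟨m, h1', h2'⟩).2.1, h1', heVm0]
  · -- involution compatibility
    intro m
    by_cases h1 : G.r m ≠ m0
    · have hb1 : G.r (G.inv m) = m0 := G.partner_root hG m0 huG m h1
      have hb2 : G.r (G.inv (G.inv m)) ≠ m0 := by
        rw [G.inv_involutive]; exact h1
      rw [heHB (G.inv m) hb1 hb2, heHA m h1, heBval]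
      have hiba : iBA ⟨G.inv m, hb1, hb2⟩ = ⟨m, h1⟩ :=
        Subtype.ext (G.inv_involutive m)
      rw [hiba]
    · have h1' : G.r m = m0 := not_not.1 h1
      by_cases h2 : G.r (G.inv m) ≠ m0
      · rw [heHA (G.inv m) h2, heHB m h1' h2, heBval, G'.inv_involutive]
        have hiba : iBA ⟨m, h1', h2⟩ = ⟨G.inv m, h2⟩ := rfl
        rw [hiba]
      · have h2' : G.r (G.inv m) = m0 := not_not.1 h2
        have hi2 : G.r (G.inv (G.inv m)) = m0 := by
          rw [G.inv_involutive]; exact h1'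
        rw [heHC (G.inv m) h2' hi2, heHC m h1' h2']
        have hic : (⟨G.inv m, h2', hi2⟩ : C) = iC ⟨m, h1', h2'⟩ := Subtype.ext rfl
        rw [hic, heC]

end MGraph
namespace MGraph

variable {g : ℕ}

lemma miso_n0 (G G' : MGraph 0) (hG : G.IsObj g) (hG' : G'.IsObj g)
    (hrG : Reduced G) (hrG' : Reduced G') : G.MIso G' := by
  classical
  have hloopG : ∀ h, G.r h = G.r (G.inv h) := by
    intro h
    by_contra hne
    obtain ⟨k, _⟩ := (hrG h hne).1
    exact k.elim0
  have hloopG' : ∀ h, G'.r h = G'.r (G'.inv h) := by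
    intro h
    by_contra hne
    obtain ⟨k, _⟩ := (hrG' h hne).1
    exact k.elim0
  obtain ⟨v0⟩ := hG.1.1
  obtain ⟨v0'⟩ := hG'.1.1
  have hallv : ∀ w : G.V, w = v0 :=
    G.loops_only hG.1 v0 (fun h hh => by rw [← hloopG h]; exact hh)
  have hallv' : ∀ w : G'.V, w = v0' :=
    G'.loops_only hG'.1 v0' (fun h hh => by rw [← hloopG' h]; exact hh)
  haveI hssV : Subsingleton G.V := ⟨fun a b => (hallv a).trans (hallv b).symm⟩
  haveI hssV' : Subsingleton G'.V := ⟨fun a b => (hallv' a).trans (hallv' b).symm⟩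
  haveI : Nonempty G.V := ⟨v0⟩
  haveI : Nonempty G'.V := ⟨v0'⟩
  have hcV : Nat.card G.V = 1 := Nat.card_unique
  have hcV' : Nat.card G'.V = 1 := Nat.card_unique
  obtain ⟨c, hc⟩ := even_card_of_fpf G.inv G.inv_involutive G.inv_ne
  obtain ⟨c', hc'⟩ := even_card_of_fpf G'.inv G'.inv_involutive G'.inv_ne
  have heu := hG.2.1
  have heu' := hG'.2.1
  unfold MGraph.numEdges at heu heu'
  have hcardH : Nat.card G.H = Nat.card G'.H := by omega
  obtain ⟨eH, heH⟩ := fpf_conj (Nat.card G.H) G.H G'.H G.inv G'.inv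
    G.inv_involutive G.inv_ne G'.inv_involutive G'.inv_ne rfl hcardH.symm
  set eV : G.V ≃ G'.V :=
    { toFun := fun _ => v0'
      invFun := fun _ => v0
      left_inv := fun a => Subsingleton.elim _ _
      right_inv := fun a => Subsingleton.elim _ _ }
  exact ⟨eV, eH, fun h => Subsingleton.elim _ _, heH, fun k => k.elim0⟩

end MGraph

theorem stmt_5' (g n : ℕ) (G G' : {G : MGraph n // MGraph.IsObj g G}) :
    MGraph.Conn g n G G' := by
  classical
  obtain ⟨A, hA⟩ := G
  obtain ⟨B, hB⟩ := G'
  obtain ⟨A₁, hA₁, hconnA, hredA⟩ := MGraph.reduce (Nat.card A.V) A hA le_rfl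
  obtain ⟨B₁, hB₁, hconnB, hredB⟩ := MGraph.reduce (Nat.card B.V) B hB le_rfl
  rcases Nat.eq_zero_or_pos n with hn | hn
  · subst hn
    have hiso : A₁.MIso B₁ := MGraph.miso_n0 A₁ B₁ hA₁ hB₁ hredA hredB
    exact (hconnA.trans (Relation.ReflTransGen.single (Or.inl hiso))).trans
      (MGraph.conn_symm hconnB)
  · set i0 : Fin n := ⟨0, hn⟩
    have hallA := A₁.reduced_all_marked hA₁ hredA hn
    have hallB := B₁.reduced_all_marked hB₁ hredB hn
    obtain ⟨A₂, hA₂, hconnA2, hallA2, hadjA2⟩ :=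
      MGraph.phaseA i0 (Nat.card {v : A₁.V // v ≠ A₁.mark i0 ∧ ¬ A₁.Adj (A₁.mark i0) v})
        A₁ hA₁ hallA le_rfl
    obtain ⟨B₂, hB₂, hconnB2, hallB2, hadjB2⟩ :=
      MGraph.phaseA i0 (Nat.card {v : B₁.V // v ≠ B₁.mark i0 ∧ ¬ B₁.Adj (B₁.mark i0) v})
        B₁ hB₁ hallB le_rfl
    obtain ⟨A₃, hA₃, hconnA3, hallA3, huniqA3⟩ :=
      MGraph.phaseB i0 (Nat.card {m : A₂.H // A₂.r m ≠ A₂.mark i0})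
        A₂ hA₂ hallA2 hadjA2 le_rfl
    obtain ⟨B₃, hB₃, hconnB3, hallB3, huniqB3⟩ :=
      MGraph.phaseB i0 (Nat.card {m : B₂.H // B₂.r m ≠ B₂.mark i0})
        B₂ hB₂ hallB2 hadjB2 le_rfl
    have hiso : A₃.MIso B₃ :=
      MGraph.canonical_miso i0 A₃ B₃ hA₃ hB₃ hallA3 hallB3 huniqA3 huniqB3
    exact ((((hconnA.trans hconnA2).trans hconnA3).trans
      (Relation.ReflTransGen.single (Or.inl hiso))).trans
      (MGraph.conn_symm hconnB3)).trans
      ((MGraph.conn_symm hconnB2).trans (MGraph.conn_symm hconnB))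

/-- For all `g, n ≥ 0`, any two objects of `Gr_{g,n}` are connected by a finite zig-zag of
moves, each of which is an isomorphism of marked graphs, an elementary collapse, or the
inverse of an elementary collapse. -/
theorem stmt_5 (g n : ℕ) (G G' : {G : MGraph n // MGraph.IsObj g G}) :
    Relation.ReflTransGen
      (fun A B : {G : MGraph n // MGraph.IsObj g G} =>
        MGraph.MIso A.1 B.1 ∨ MGraph.IsElemCollapse A.1 B.1 ∨ MGraph.IsElemCollapse B.1 A.1)
      G G' := by
  exact stmt_5' g n G G'
end

section
/- For all integers g, n ≥ 0, the objects of Gr_{g,n} fall into finitely many isomorphism classes: there exists a finite list of objects of Gr_{g,n} such that every object of Gr_{g,n} is isomorphic (as a marked graph) to one in the list. -/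
section Aux

open MGraph

variable {n : ℕ}

/-- The raw data for a normalized marked graph with at most `A` vertices and at most
`B` half-edges. -/
def GData (n A B : ℕ) : Type :=
  Σ a : Fin (A + 1), Σ b : Fin (B + 1),
    {p : (Fin b.1 → Fin a.1) × (Fin b.1 → Fin b.1) × (Fin n → Fin a.1) //
      (∀ h, p.2.1 (p.2.1 h) = h) ∧ (∀ h, p.2.1 h ≠ h) ∧ Function.Injective p.2.2}

noncomputable instance {A B : ℕ} : Fintype (GData n A B) := by
  have : Finite (GData n A B) := by unfold GData; infer_instance
  exact Fintype.ofFinite _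

/-- The marked graph associated to a piece of data. -/
def GData.toGraph {A B : ℕ} (t : GData n A B) : MGraph n where
  V := Fin t.1.1
  H := Fin t.2.1.1
  r := t.2.2.1.1
  inv := t.2.2.1.2.1
  inv_involutive := t.2.2.2.1
  inv_ne := t.2.2.2.2.1
  mark := t.2.2.1.2.2
  mark_injective := t.2.2.2.2.2

/-- `IsObj` is invariant under marked isomorphism. -/
theorem miso_isObj {g : ℕ} {G G' : MGraph n} (e : MIso G G') (h : IsObj g G) :
    IsObj g G' := by
  obtain ⟨eV, eH, hr, hi, hm⟩ := e
  obtain ⟨⟨hne, hconn⟩, hbetti, hval⟩ := h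
  have cardH : Nat.card G'.H = Nat.card G.H := Nat.card_congr eH.symm
  have cardV : Nat.card G'.V = Nat.card G.V := Nat.card_congr eV.symm
  have hadj : ∀ a b, G.Adj a b → G'.Adj (eV a) (eV b) := by
    rintro a b ⟨h, h1, h2⟩
    exact ⟨eH h, by rw [← hr, h1], by rw [← hi, ← hr, h2]⟩
  refine ⟨⟨⟨eV hne.some⟩, ?_⟩, ?_, ?_⟩
  · intro v w
    have : Relation.ReflTransGen G'.Adj (eV (eV.symm v)) (eV (eV.symm w)) := Relation.ReflTransGen.lift eV hadj _ _ (hconn (eV.symm v) (eV.symm w))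
    simpa using this
  · rw [MGraph.numEdges, cardH, cardV]; exact hbetti
  · intro v hv
    have hu : eV.symm v ∉ Set.range G.mark := by
      rintro ⟨k, hk⟩
      exact hv ⟨k, by rw [← hm, hk, Equiv.apply_symm_apply]⟩
    have hvv : G'.valence v = G.valence (eV.symm v) := by
      rw [MGraph.valence, MGraph.valence]
      refine Nat.card_congr (Equiv.subtypeEquiv eH fun h => ?_).symm
      rw [← hr]
      exact Equiv.eq_symm_apply eV
    rw [hvv]
    exact hval _ hu

/-- Cardinality bounds for objects of `Gr_{g,n}`. -/
theorem card_bound {g : ℕ} {G : MGraph n} (h : IsObj g G) :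
    Nat.card G.V ≤ 2 * g + 3 * n ∧ Nat.card G.H ≤ 6 * g + 6 * n + 1 := by
  classical
  obtain ⟨⟨hne, _⟩, hbetti, hval⟩ := h
  have hcV : Nat.card G.V = Fintype.card G.V := Nat.card_eq_fintype_card
  have hcH : Nat.card G.H = Fintype.card G.H := Nat.card_eq_fintype_card
  set cV := Fintype.card G.V with hcVdef
  set cH := Fintype.card G.H with hcHdef
  have hpos : 0 < cV := @Fintype.card_pos _ _ hne
  have hvalc : ∀ v, G.valence v = (Finset.univ.filter fun h => G.r h = v).card := by
    intro v
    rw [MGraph.valence, Nat.card_eq_fintype_card, Fintype.card_subtype]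
  have hsum : cH = ∑ v : G.V, (Finset.univ.filter fun h => G.r h = v).card := by
    rw [hcHdef, ← Finset.card_univ]
    exact Finset.card_eq_sum_card_fiberwise (fun x _ => Finset.mem_univ (G.r x))
  have hunm : (Finset.univ \ Finset.image G.mark Finset.univ).card = cV - n := by
    rw [Finset.card_sdiff_of_subset (Finset.subset_univ _),
      Finset.card_image_of_injective _ G.mark_injective]
    simp [hcVdef]
  have hlow : 3 * (cV - n) ≤ cH := by
    calc 3 * (cV - n) = ∑ _v ∈ Finset.univ \ Finset.image G.mark Finset.univ, 3 := by
          rw [Finset.sum_const, hunm, smul_eq_mul, Nat.mul_comm]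
      _ ≤ ∑ v ∈ Finset.univ \ Finset.image G.mark Finset.univ,
            (Finset.univ.filter fun h => G.r h = v).card := by
          refine Finset.sum_le_sum fun v hv => ?_
          rw [← hvalc]
          refine hval v ?_
          rintro ⟨k, hk⟩
          simp only [Finset.mem_sdiff, Finset.mem_image] at hv
          exact hv.2 ⟨k, Finset.mem_univ _, hk⟩
      _ ≤ ∑ v : G.V, (Finset.univ.filter fun h => G.r h = v).card :=
          Finset.sum_le_sum_of_subset (Finset.subset_univ _)
      _ = cH := hsum.symm
  have hb : cH / 2 + 1 = g + cV := by
    rw [MGraph.numEdges, hcH] at hbetti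
    rw [hcV] at hbetti
    exact hbetti
  constructor <;> [rw [hcV]; rw [hcH]] <;> omega

end Aux

/-- For all `g, n ≥ 0` the objects of `Gr_{g,n}` fall into finitely many isomorphism
classes: there is a finite list of objects such that every object of `Gr_{g,n}` is
isomorphic, as a marked graph, to one in the list. -/
theorem stmt_6 (g n : ℕ) :
    ∃ (m : ℕ) (L : Fin m → MGraph n),
      (∀ j, MGraph.IsObj g (L j)) ∧
      ∀ G : MGraph n, MGraph.IsObj g G → ∃ j, MGraph.MIso G (L j) := by
  classical
  let F : GData n (2 * g + 3 * n) (6 * g + 6 * n + 1) → MGraph n := GData.toGraph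
  let s := Finset.univ.filter (fun t => MGraph.IsObj g (F t))
  refine ⟨s.toList.length, fun j => F (s.toList.get j), ?_, ?_⟩
  · intro j
    have hmem : s.toList.get j ∈ s := Finset.mem_toList.1 (s.toList.get_mem j)
    exact (Finset.mem_filter.1 hmem).2
  · intro G hG
    obtain ⟨hV, hH⟩ := card_bound hG
    rw [Nat.card_eq_fintype_card] at hV hH
    set a := Fintype.card G.V with ha
    set b := Fintype.card G.H with hb
    let eV : G.V ≃ Fin a := Fintype.equivFin G.V
    let eH : G.H ≃ Fin b := Fintype.equivFin G.H
    let t : GData n (2 * g + 3 * n) (6 * g + 6 * n + 1) :=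
      ⟨⟨a, by omega⟩, ⟨b, by omega⟩,
        ⟨(fun h => eV (G.r (eH.symm h)), fun h => eH (G.inv (eH.symm h)),
            fun k => eV (G.mark k)),
          by intro h; simp [G.inv_involutive],
          by
            intro h hc
            exact G.inv_ne (eH.symm h) (by simpa using congrArg eH.symm hc),
          fun x y hxy => G.mark_injective (eV.injective hxy)⟩⟩
    have hiso : MGraph.MIso G (F t) := by
      refine ⟨eV, eH, ?_, ?_, ?_⟩
      · intro h
        show eV (G.r h) = eV (G.r (eH.symm (eH h)))
        simp
      · intro h
        show eH (G.inv h) = eH (G.inv (eH.symm (eH h)))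
        simp
      · intro k
        rfl
    have hobj : MGraph.IsObj g (F t) := miso_isObj hiso hG
    have ht : t ∈ s := Finset.mem_filter.2 ⟨Finset.mem_univ _, hobj⟩
    obtain ⟨j, hj⟩ := List.mem_iff_get.1 (Finset.mem_toList.2 ht)
    refine ⟨j, ?_⟩
    show MGraph.MIso G (F (s.toList.get j))
    rw [hj]
    exact hiso
end

section
/- Fix an integer d ≥ 3. Let R be the commutative ℚ-algebra with generators ω_{ijk} for each triple (i,j,k) of pairwise distinct elements of {1,…,d}, modulo the ideal I generated by the elements ω_{ijk} + ω_{jik}, ω_{ijk} − ω_{jki}, ω_{ijk}², and ω_{ijk} − ω_{ijl} − ω_{jkl} − ω_{kil} (the last family over all quadruples of pairwise distinct i,j,k,l). Then the ℚ-algebra homomorphism from ℚ[x_{ij} : 1 ≤ i < j ≤ d−1] / (x_{ij}², x_{ij}x_{jk} − x_{ij}x_{ik} − x_{jk}x_{ik}) to R sending x_{ij} to the class of ω_{ijd} is well-defined and is an isomorphism of ℚ-algebras. -/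
open MvPolynomial

/-- Triples of pairwise distinct elements of `Fin d`. -/
def Tri (d : ℕ) : Type :=
  {t : Fin d × Fin d × Fin d // t.1 ≠ t.2.1 ∧ t.1 ≠ t.2.2 ∧ t.2.1 ≠ t.2.2}

namespace Tri

variable {d : ℕ}

/-- Swap the first two entries: `(i,j,k) ↦ (j,i,k)`. -/
def sw (t : Tri d) : Tri d :=
  ⟨(t.1.2.1, t.1.1, t.1.2.2), ⟨Ne.symm t.2.1, t.2.2.2, t.2.2.1⟩⟩

/-- Cyclically rotate: `(i,j,k) ↦ (j,k,i)`. -/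
def cyc (t : Tri d) : Tri d :=
  ⟨(t.1.2.1, t.1.2.2, t.1.1), ⟨t.2.2.2, Ne.symm t.2.1, Ne.symm t.2.2.1⟩⟩

end Tri

/-- Quadruples of pairwise distinct elements of `Fin d`. -/
def Quad (d : ℕ) : Type :=
  {q : Fin d × Fin d × Fin d × Fin d //
    q.1 ≠ q.2.1 ∧ q.1 ≠ q.2.2.1 ∧ q.1 ≠ q.2.2.2 ∧
      q.2.1 ≠ q.2.2.1 ∧ q.2.1 ≠ q.2.2.2 ∧ q.2.2.1 ≠ q.2.2.2}

namespace Quad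

variable {d : ℕ}

/-- `(i,j,k,l) ↦ (i,j,k)`. -/
def t₁ (q : Quad d) : Tri d :=
  ⟨(q.1.1, q.1.2.1, q.1.2.2.1), ⟨q.2.1, q.2.2.1, q.2.2.2.2.1⟩⟩

/-- `(i,j,k,l) ↦ (i,j,l)`. -/
def t₂ (q : Quad d) : Tri d :=
  ⟨(q.1.1, q.1.2.1, q.1.2.2.2), ⟨q.2.1, q.2.2.2.1, q.2.2.2.2.2.1⟩⟩

/-- `(i,j,k,l) ↦ (j,k,l)`. -/
def t₃ (q : Quad d) : Tri d :=
  ⟨(q.1.2.1, q.1.2.2.1, q.1.2.2.2), ⟨q.2.2.2.2.1, q.2.2.2.2.2.1, q.2.2.2.2.2.2⟩⟩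

/-- `(i,j,k,l) ↦ (k,i,l)`. -/
def t₄ (q : Quad d) : Tri d :=
  ⟨(q.1.2.2.1, q.1.1, q.1.2.2.2), ⟨Ne.symm q.2.2.1, q.2.2.2.2.2.2, q.2.2.2.1⟩⟩

end Quad

/-- The relations defining the rational cohomology ring of `Conf_d(S³)`:
`ω_{ijk} + ω_{jik}`, `ω_{ijk} − ω_{jki}`, `ω_{ijk}²`, and
`ω_{ijk} − ω_{ijl} − ω_{jkl} − ω_{kil}`. -/
def relOmega (d : ℕ) : Set (MvPolynomial (Tri d) ℚ) :=
  (Set.range fun t : Tri d => X t + X t.sw) ∪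
  (Set.range fun t : Tri d => X t - X t.cyc) ∪
  (Set.range fun t : Tri d => (X t) ^ 2) ∪
  (Set.range fun q : Quad d => X q.t₁ - X q.t₂ - X q.t₃ - X q.t₄)

/-- The presented ring `R` (the rational cohomology ring of `Conf_d(S³)`). -/
abbrev ConfRing (d : ℕ) : Type :=
  MvPolynomial (Tri d) ℚ ⧸ Ideal.span (relOmega d)

/-- Ordered pairs `(i,j)` with `i < j` in `Fin e`, indexing the generators `x_{ij}`. -/
def P2 (e : ℕ) : Type := {p : Fin e × Fin e // p.1 < p.2}

/-- The Feichtner–Ziegler relations: `x_{ij}²` and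
`x_{ij}x_{jk} − x_{ij}x_{ik} − x_{jk}x_{ik}` for `i < j < k`. -/
def relFZ (e : ℕ) : Set (MvPolynomial (P2 e) ℚ) :=
  (Set.range fun p : P2 e => (X p) ^ 2) ∪
  {P | ∃ (i j k : Fin e) (h1 : i < j) (h2 : j < k),
    P = X (⟨(i, j), h1⟩ : P2 e) * X (⟨(j, k), h2⟩ : P2 e)
        - X (⟨(i, j), h1⟩ : P2 e) * X (⟨(i, k), lt_trans h1 h2⟩ : P2 e)
        - X (⟨(j, k), h2⟩ : P2 e) * X (⟨(i, k), lt_trans h1 h2⟩ : P2 e)}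

/-- The Feichtner–Ziegler ring, i.e. `H^*(Conf_{e}(ℝ³); ℚ)`. -/
abbrev FZRing (e : ℕ) : Type :=
  MvPolynomial (P2 e) ℚ ⧸ Ideal.span (relFZ e)

/-- The pair `(i,j)`, `1 ≤ i < j ≤ d−1`, viewed as the triple `(i,j,d)`, for `d = m+3`. -/
def toTri (m : ℕ) (p : P2 (m + 2)) : Tri (m + 3) :=
  ⟨(p.1.1.castSucc, p.1.2.castSucc, Fin.last (m + 2)),
    ⟨ne_of_lt (by exact_mod_cast Fin.castSucc_lt_castSucc_iff.mpr p.2),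
     ne_of_lt (Fin.castSucc_lt_last _), ne_of_lt (Fin.castSucc_lt_last _)⟩⟩

set_option maxHeartbeats 1000000
set_option synthInstance.maxHeartbeats 400000

namespace Stmt7Aux

variable {d m : ℕ}

noncomputable abbrev mkC (d : ℕ) := Ideal.Quotient.mk (Ideal.span (relOmega d))
noncomputable abbrev mkF (e : ℕ) := Ideal.Quotient.mk (Ideal.span (relFZ e))

lemma mk_sw (t : Tri d) : mkC d (X t.sw) = - mkC d (X t) := by
  have h : X t + X t.sw ∈ Ideal.span (relOmega d) :=
    Ideal.subset_span (Or.inl (Or.inl (Or.inl ⟨t, rfl⟩)))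
  have h2 := Ideal.Quotient.eq_zero_iff_mem.2 h
  rw [map_add] at h2
  linear_combination h2

lemma mk_cyc (t : Tri d) : mkC d (X t.cyc) = mkC d (X t) := by
  have h : X t - X t.cyc ∈ Ideal.span (relOmega d) :=
    Ideal.subset_span (Or.inl (Or.inl (Or.inr ⟨t, rfl⟩)))
  have h2 := Ideal.Quotient.eq_zero_iff_mem.2 h
  rw [map_sub] at h2
  linear_combination -h2

lemma mk_sq (t : Tri d) : mkC d (X t) ^ 2 = 0 := by
  have h : (X t) ^ 2 ∈ Ideal.span (relOmega d) :=
    Ideal.subset_span (Or.inl (Or.inr ⟨t, rfl⟩))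
  have h2 := Ideal.Quotient.eq_zero_iff_mem.2 h
  rw [map_pow] at h2
  exact h2

lemma mk_quad (q : Quad d) :
    mkC d (X q.t₁) = mkC d (X q.t₂) + mkC d (X q.t₃) + mkC d (X q.t₄) := by
  have h : X q.t₁ - X q.t₂ - X q.t₃ - X q.t₄ ∈ Ideal.span (relOmega d) :=
    Ideal.subset_span (Or.inr ⟨q, rfl⟩)
  have h2 := Ideal.Quotient.eq_zero_iff_mem.2 h
  rw [map_sub, map_sub, map_sub] at h2
  linear_combination h2

/-- The basic generator-valued map on ordered pairs of `Fin (m+2)`. -/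
noncomputable def b (i j : Fin (m + 2)) : MvPolynomial (P2 (m + 2)) ℚ :=
  if h : i < j then X ⟨(i, j), h⟩ else if h' : j < i then - X ⟨(j, i), h'⟩ else 0

lemma b_add (i j : Fin (m + 2)) : b i j + b j i = 0 := by
  unfold b
  rcases lt_trichotomy i j with h | h | h
  · rw [dif_pos h, dif_neg (asymm h), dif_pos h]; ring
  · subst h; simp
  · rw [dif_neg (asymm h), dif_pos h, dif_pos h]; ring

noncomputable def a (i j : Fin (m + 3)) : MvPolynomial (P2 (m + 2)) ℚ :=
  if hi : i = Fin.last (m + 2) then 0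
  else if hj : j = Fin.last (m + 2) then 0
  else b (i.castPred hi) (j.castPred hj)

lemma a_last_left (j : Fin (m + 3)) : a (Fin.last (m + 2)) j = 0 := dif_pos rfl

lemma a_last_right (i : Fin (m + 3)) : a i (Fin.last (m + 2)) = 0 := by
  unfold a
  by_cases hi : i = Fin.last (m + 2)
  · rw [dif_pos hi]
  · rw [dif_neg hi, dif_pos rfl]

lemma a_eq_b (i j : Fin (m + 3)) (hi : i ≠ Fin.last (m + 2)) (hj : j ≠ Fin.last (m + 2)) :
    a i j = b (i.castPred hi) (j.castPred hj) := by
  unfold a; rw [dif_neg hi, dif_neg hj]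

lemma a_add (i j : Fin (m + 3)) : a i j + a j i = 0 := by
  unfold a
  by_cases hi : i = Fin.last (m + 2) <;> by_cases hj : j = Fin.last (m + 2) <;>
    simp [hi, hj, b_add]

noncomputable def g (t : Tri (m + 3)) : MvPolynomial (P2 (m + 2)) ℚ :=
  a t.1.1 t.1.2.1 + a t.1.2.1 t.1.2.2 + a t.1.2.2 t.1.1

lemma g_sw (t : Tri (m + 3)) : g t.sw = - g t := by
  show a t.1.2.1 t.1.1 + a t.1.1 t.1.2.2 + a t.1.2.2 t.1.2.1 = _
  unfold g
  linear_combination a_add t.1.1 t.1.2.1 + a_add t.1.1 t.1.2.2 + a_add t.1.2.1 t.1.2.2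

lemma g_cyc (t : Tri (m + 3)) : g t.cyc = g t := by
  show a t.1.2.1 t.1.2.2 + a t.1.2.2 t.1.1 + a t.1.1 t.1.2.1 = _
  unfold g; ring

lemma g_quad (q : Quad (m + 3)) : g q.t₁ - g q.t₂ - g q.t₃ - g q.t₄ = 0 := by
  show (a q.1.1 q.1.2.1 + a q.1.2.1 q.1.2.2.1 + a q.1.2.2.1 q.1.1)
      - (a q.1.1 q.1.2.1 + a q.1.2.1 q.1.2.2.2 + a q.1.2.2.2 q.1.1)
      - (a q.1.2.1 q.1.2.2.1 + a q.1.2.2.1 q.1.2.2.2 + a q.1.2.2.2 q.1.2.1)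
      - (a q.1.2.2.1 q.1.1 + a q.1.1 q.1.2.2.2 + a q.1.2.2.2 q.1.2.2.1) = 0
  linear_combination -a_add q.1.2.1 q.1.2.2.2 - a_add q.1.1 q.1.2.2.2 -
    a_add q.1.2.2.1 q.1.2.2.2

end Stmt7Aux

namespace Stmt7Aux

variable {m : ℕ}

lemma canon_sq {i j k : Fin (m + 2)} (h1 : i < j) (h2 : j < k) :
    ((X ⟨(i, j), h1⟩ + X ⟨(j, k), h2⟩ - X ⟨(i, k), lt_trans h1 h2⟩ :
      MvPolynomial (P2 (m + 2)) ℚ)) ^ 2 ∈ Ideal.span (relFZ (m + 2)) := by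
  have e : ((X ⟨(i, j), h1⟩ + X ⟨(j, k), h2⟩ - X ⟨(i, k), lt_trans h1 h2⟩ :
      MvPolynomial (P2 (m + 2)) ℚ)) ^ 2 =
      (X ⟨(i, j), h1⟩) ^ 2 + (X ⟨(j, k), h2⟩) ^ 2 + (X ⟨(i, k), lt_trans h1 h2⟩) ^ 2 +
      2 * (X (⟨(i, j), h1⟩ : P2 (m + 2)) * X (⟨(j, k), h2⟩ : P2 (m + 2))
        - X (⟨(i, j), h1⟩ : P2 (m + 2)) * X (⟨(i, k), lt_trans h1 h2⟩ : P2 (m + 2))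
        - X (⟨(j, k), h2⟩ : P2 (m + 2)) * X (⟨(i, k), lt_trans h1 h2⟩ : P2 (m + 2))) := by
    have key : ∀ a b c : MvPolynomial (P2 (m + 2)) ℚ,
        (a + b - c) ^ 2 = a ^ 2 + b ^ 2 + c ^ 2 + 2 * (a * b - a * c - b * c) := by
      intros; ring
    exact key _ _ _
  rw [e]
  refine add_mem (add_mem (add_mem ?_ ?_) ?_) (Ideal.mul_mem_left _ 2 ?_)
  · exact Ideal.subset_span (Or.inl ⟨_, rfl⟩)
  · exact Ideal.subset_span (Or.inl ⟨_, rfl⟩)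
  · exact Ideal.subset_span (Or.inl ⟨_, rfl⟩)
  · exact Ideal.subset_span (Or.inr ⟨i, j, k, h1, h2, rfl⟩)

lemma b_sq_mem {i j : Fin (m + 2)} (h : i ≠ j) :
    (b i j) ^ 2 ∈ Ideal.span (relFZ (m + 2)) := by
  unfold b
  rcases lt_trichotomy i j with h1 | h1 | h1
  · rw [dif_pos h1]; exact Ideal.subset_span (Or.inl ⟨_, rfl⟩)
  · exact absurd h1 h
  · rw [dif_neg (asymm h1), dif_pos h1, neg_sq]
    exact Ideal.subset_span (Or.inl ⟨_, rfl⟩)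

noncomputable def S (i j k : Fin (m + 2)) : MvPolynomial (P2 (m + 2)) ℚ :=
  b i j + b j k + b k i

lemma S_sorted {i j k : Fin (m + 2)} (h1 : i < j) (h2 : j < k) :
    S i j k = X ⟨(i, j), h1⟩ + X ⟨(j, k), h2⟩ - X ⟨(i, k), lt_trans h1 h2⟩ := by
  unfold S b
  rw [dif_pos h1, dif_pos h2, dif_neg (asymm (lt_trans h1 h2)), dif_pos (lt_trans h1 h2)]
  ring

lemma S_sq_sorted {i j k : Fin (m + 2)} (h1 : i < j) (h2 : j < k) :
    (S i j k) ^ 2 ∈ Ideal.span (relFZ (m + 2)) := by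
  rw [S_sorted h1 h2]; exact canon_sq h1 h2

lemma S_sq_mem {i j k : Fin (m + 2)} (hij : i ≠ j) (hik : i ≠ k) (hjk : j ≠ k) :
    (S i j k) ^ 2 ∈ Ideal.span (relFZ (m + 2)) := by
  rcases lt_trichotomy i j with h1 | h1 | h1
  · rcases lt_trichotomy j k with h2 | h2 | h2
    · exact S_sq_sorted h1 h2
    · exact absurd h2 hjk
    · rcases lt_trichotomy i k with h3 | h3 | h3
      · -- i < k < j : S i j k = - S i k j
        have e : S i j k = - S i k j := by
          unfold S; linear_combination b_add i j + b_add j k + b_add k i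
        rw [e, neg_sq]; exact S_sq_sorted h3 h2
      · exact absurd h3 hik
      · -- k < i < j : S i j k = S k i j
        have e : S i j k = S k i j := by unfold S; ring
        rw [e]; exact S_sq_sorted h3 h1
  · exact absurd h1 hij
  · rcases lt_trichotomy i k with h2 | h2 | h2
    · -- j < i < k : S i j k = - S j i k
      have e : S i j k = - S j i k := by
        unfold S; linear_combination b_add i j + b_add j k + b_add k i
      rw [e, neg_sq]; exact S_sq_sorted h1 h2
    · exact absurd h2 hik
    · rcases lt_trichotomy j k with h3 | h3 | h3
      · -- j < k < i : S i j k = S j k i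
        have e : S i j k = S j k i := by unfold S; ring
        rw [e]; exact S_sq_sorted h3 h2
      · exact absurd h3 hjk
      · -- k < j < i : S i j k = - S k j i
        have e : S i j k = - S k j i := by
          unfold S; linear_combination b_add i j + b_add j k + b_add k i
        rw [e, neg_sq]; exact S_sq_sorted h3 h1

lemma castPred_ne {i j : Fin (m + 3)} (h : i ≠ j) (hi : i ≠ Fin.last (m + 2))
    (hj : j ≠ Fin.last (m + 2)) : i.castPred hi ≠ j.castPred hj := by
  intro he
  apply h
  rw [← Fin.castSucc_castPred i hi, ← Fin.castSucc_castPred j hj, he]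

lemma g_sq_mem (t : Tri (m + 3)) : (g t) ^ 2 ∈ Ideal.span (relFZ (m + 2)) := by
  obtain ⟨⟨i, j, k⟩, hij, hik, hjk⟩ := t
  show (a i j + a j k + a k i) ^ 2 ∈ _
  by_cases hi : i = Fin.last (m + 2)
  · subst hi
    have hj : j ≠ Fin.last (m + 2) := fun h => hij h.symm
    have hk : k ≠ Fin.last (m + 2) := fun h => hik h.symm
    rw [a_last_left, a_last_right, a_eq_b j k hj hk]
    simpa using b_sq_mem (castPred_ne hjk hj hk)
  · by_cases hj : j = Fin.last (m + 2)
    · subst hj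
      have hk : k ≠ Fin.last (m + 2) := fun h => hjk h.symm
      rw [a_last_left, a_last_right, a_eq_b k i hk hi]
      simpa using b_sq_mem (castPred_ne (Ne.symm hik) hk hi)
    · by_cases hk : k = Fin.last (m + 2)
      · subst hk
        rw [a_last_left, a_last_right, a_eq_b i j hi hj]
        simpa using b_sq_mem (castPred_ne hij hi hj)
      · rw [a_eq_b i j hi hj, a_eq_b j k hj hk, a_eq_b k i hk hi]
        exact S_sq_mem (castPred_ne hij hi hj) (castPred_ne hik hi hk)
          (castPred_ne hjk hj hk)

end Stmt7Aux

namespace Stmt7Aux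

variable {m : ℕ}

noncomputable def phi (m : ℕ) : MvPolynomial (P2 (m + 2)) ℚ →ₐ[ℚ] ConfRing (m + 3) :=
  aeval fun p : P2 (m + 2) => mkC (m + 3) (X (toTri m p))

lemma phi_X (p : P2 (m + 2)) : phi m (X p) = mkC (m + 3) (X (toTri m p)) :=
  aeval_X _ _

lemma half_of_two_mul {A : Type*} [CommRing A] [Algebra ℚ A] {x : A}
    (h : 2 * x = 0) : x = 0 := by
  have h2 : (2 : ℚ) • x = 0 := by
    rw [Algebra.smul_def, map_ofNat]; exact h
  calc x = (2 : ℚ)⁻¹ • ((2 : ℚ) • x) := by rw [smul_smul]; norm_num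
    _ = 0 := by rw [h2, smul_zero]

lemma phi_rel (x : MvPolynomial (P2 (m + 2)) ℚ) (hx : x ∈ Ideal.span (relFZ (m + 2))) :
    phi m x = 0 := by
  have hle : Ideal.span (relFZ (m + 2)) ≤ RingHom.ker (phi m).toRingHom := by
    rw [Ideal.span_le]
    rintro y (⟨p, rfl⟩ | ⟨i, j, k, h1, h2, rfl⟩)
    · show phi m _ = 0
      rw [map_pow, phi_X]
      exact mk_sq _
    · show phi m _ = 0
      have key : ∀ P Q R S T U : MvPolynomial (P2 (m + 2)) ℚ,
          phi m (P * Q - R * S - T * U) = phi m P * phi m Q - phi m R * phi m S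
            - phi m T * phi m U := by
        intros; simp only [map_sub, map_mul]
      refine (key _ _ _ _ _ _).trans ?_
      erw [phi_X, phi_X, phi_X]
      set A := mkC (m + 3) (X (toTri m ⟨(i, j), h1⟩))
      set B := mkC (m + 3) (X (toTri m ⟨(j, k), h2⟩))
      set C := mkC (m + 3) (X (toTri m ⟨(i, k), lt_trans h1 h2⟩))
      -- the quadruple (i, j, k, last)
      have hijk : i.castSucc ≠ j.castSucc := by
        simpa using ne_of_lt (Fin.castSucc_lt_castSucc_iff.mpr h1)
      have hik' : i.castSucc ≠ k.castSucc := by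
        simpa using ne_of_lt (Fin.castSucc_lt_castSucc_iff.mpr (lt_trans h1 h2))
      have hjk' : j.castSucc ≠ k.castSucc := by
        simpa using ne_of_lt (Fin.castSucc_lt_castSucc_iff.mpr h2)
      set q : Quad (m + 3) := ⟨(i.castSucc, j.castSucc, k.castSucc, Fin.last (m + 2)),
        ⟨hijk, hik', ne_of_lt (Fin.castSucc_lt_last _), hjk',
          ne_of_lt (Fin.castSucc_lt_last _), ne_of_lt (Fin.castSucc_lt_last _)⟩⟩ with hq
      have hquad := mk_quad q
      have hA : mkC (m + 3) (X q.t₂) = A := rfl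
      have hB : mkC (m + 3) (X q.t₃) = B := rfl
      have hC : mkC (m + 3) (X q.t₄) = - C := by
        have : q.t₄ = (toTri m ⟨(i, k), lt_trans h1 h2⟩).sw := rfl
        rw [this, mk_sw]
      rw [hA, hB, hC] at hquad
      have hsq1 : (A + B + -C) ^ 2 = 0 := by rw [← hquad]; exact mk_sq q.t₁
      have hsqA : A ^ 2 = 0 := mk_sq _
      have hsqB : B ^ 2 = 0 := mk_sq _
      have hsqC : C ^ 2 = 0 := mk_sq _
      apply half_of_two_mul
      linear_combination hsq1 - hsqA - hsqB - hsqC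
  exact hle hx

noncomputable def F (m : ℕ) : FZRing (m + 2) →ₐ[ℚ] ConfRing (m + 3) :=
  Ideal.Quotient.liftₐ _ (phi m) phi_rel

lemma F_mk (x : MvPolynomial (P2 (m + 2)) ℚ) : F m (mkF (m + 2) x) = phi m x := by
  rw [F, Ideal.Quotient.liftₐ_apply]
  rfl

noncomputable def psi (m : ℕ) : MvPolynomial (Tri (m + 3)) ℚ →ₐ[ℚ] FZRing (m + 2) :=
  (Ideal.Quotient.mkₐ ℚ (Ideal.span (relFZ (m + 2)))).comp (aeval g)

lemma psi_X (t : Tri (m + 3)) : psi m (X t) = mkF (m + 2) (g t) := by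
  simp [psi]

lemma psi_rel (x : MvPolynomial (Tri (m + 3)) ℚ) (hx : x ∈ Ideal.span (relOmega (m + 3))) :
    psi m x = 0 := by
  have hle : Ideal.span (relOmega (m + 3)) ≤ RingHom.ker (psi m).toRingHom := by
    rw [Ideal.span_le]
    rintro y ((((⟨t, rfl⟩ | ⟨t, rfl⟩) | ⟨t, rfl⟩)) | ⟨q, rfl⟩)
    · show psi m _ = 0
      rw [map_add, psi_X, psi_X, g_sw, map_neg]
      ring
    · show psi m _ = 0
      rw [map_sub, psi_X, psi_X, g_cyc]
      ring
    · show psi m _ = 0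
      rw [map_pow, psi_X, ← map_pow]
      exact Ideal.Quotient.eq_zero_iff_mem.2 (g_sq_mem t)
    · show psi m _ = 0
      rw [map_sub, map_sub, map_sub, psi_X, psi_X, psi_X, psi_X,
        ← map_sub, ← map_sub, ← map_sub, g_quad]
      exact map_zero _
  exact hle hx

noncomputable def G (m : ℕ) : ConfRing (m + 3) →ₐ[ℚ] FZRing (m + 2) :=
  Ideal.Quotient.liftₐ _ (psi m) psi_rel

lemma G_mk (x : MvPolynomial (Tri (m + 3)) ℚ) : G m (mkC (m + 3) x) = psi m x := by
  rw [G, Ideal.Quotient.liftₐ_apply]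
  rfl

lemma g_toTri (p : P2 (m + 2)) : g (toTri m p) = X p := by
  obtain ⟨⟨i, j⟩, hp⟩ := p
  show a i.castSucc j.castSucc + a j.castSucc (Fin.last (m + 2)) +
    a (Fin.last (m + 2)) i.castSucc = X _
  rw [a_last_left, a_last_right,
    a_eq_b _ _ (ne_of_lt (Fin.castSucc_lt_last _)) (ne_of_lt (Fin.castSucc_lt_last _))]
  simp only [Fin.castPred_castSucc, add_zero]
  unfold b
  rw [dif_pos hp]

lemma GF : (G m).comp (F m) = AlgHom.id ℚ (FZRing (m + 2)) := by
  apply Ideal.Quotient.algHom_ext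
  apply MvPolynomial.algHom_ext
  intro p
  show G m (F m (mkF (m + 2) (X p))) = mkF (m + 2) (X p)
  rw [F_mk, phi_X, G_mk, psi_X, g_toTri]

lemma phi_a (i j : Fin (m + 3)) (hij : i ≠ j) (hi : i ≠ Fin.last (m + 2))
    (hj : j ≠ Fin.last (m + 2)) :
    phi m (a i j) = mkC (m + 3)
      (X (⟨(i, j, Fin.last (m + 2)), ⟨hij, hi, hj⟩⟩ : Tri (m + 3))) := by
  rw [a_eq_b i j hi hj]
  unfold b
  rcases lt_trichotomy (i.castPred hi) (j.castPred hj) with h1 | h1 | h1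
  · rw [dif_pos h1]; erw [phi_X]
    have e : toTri m ⟨(i.castPred hi, j.castPred hj), h1⟩ =
        (⟨(i, j, Fin.last (m + 2)), hij, hi, hj⟩ : Tri (m + 3)) := by
      apply Subtype.ext
      simp [toTri, Fin.castSucc_castPred]
    rw [e]
  · exact absurd h1 (castPred_ne hij hi hj)
  · rw [dif_neg (asymm h1), dif_pos h1, map_neg]; erw [phi_X]
    have : toTri m ⟨(j.castPred hj, i.castPred hi), h1⟩ =
        Tri.sw ⟨(i, j, Fin.last (m + 2)), hij, hi, hj⟩ := by
      apply Subtype.ext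
      simp [toTri, Fin.castSucc_castPred, Tri.sw]
    rw [this]; erw [mk_sw]; rw [neg_neg]

lemma phi_g (t : Tri (m + 3)) : phi m (g t) = mkC (m + 3) (X t) := by
  obtain ⟨⟨i, j, k⟩, hij, hik, hjk⟩ := t
  show phi m (a i j + a j k + a k i) = _
  by_cases hi : i = Fin.last (m + 2)
  · subst hi
    have hj : j ≠ Fin.last (m + 2) := fun h => hij h.symm
    have hk : k ≠ Fin.last (m + 2) := fun h => hik h.symm
    rw [a_last_left, a_last_right, zero_add, add_zero, phi_a j k hjk hj hk]
    exact mk_cyc ⟨(Fin.last (m + 2), j, k), hij, hik, hjk⟩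
  · by_cases hj : j = Fin.last (m + 2)
    · subst hj
      have hk : k ≠ Fin.last (m + 2) := fun h => hjk h.symm
      rw [a_last_right, a_last_left, zero_add, zero_add,
        phi_a k i (Ne.symm hik) hk hi]
      have h1 := mk_cyc ⟨(i, Fin.last (m + 2), k), hij, hik, hjk⟩
      have h2 := mk_cyc (d := m + 3) (Tri.cyc ⟨(i, Fin.last (m + 2), k), hij, hik, hjk⟩)
      rw [← h1, ← h2]
      rfl
    · by_cases hk : k = Fin.last (m + 2)
      · subst hk
        rw [a_last_right, a_last_left, add_zero, add_zero, phi_a i j hij hi hj]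
      · rw [map_add, map_add, phi_a i j hij hi hj, phi_a j k hjk hj hk,
          phi_a k i (Ne.symm hik) hk hi]
        set q : Quad (m + 3) := ⟨(i, j, k, Fin.last (m + 2)),
          ⟨hij, hik, hi, hjk, hj, hk⟩⟩ with hq
        exact (mk_quad q).symm

lemma FG : (F m).comp (G m) = AlgHom.id ℚ (ConfRing (m + 3)) := by
  apply Ideal.Quotient.algHom_ext
  apply MvPolynomial.algHom_ext
  intro t
  show F m (G m (mkC (m + 3) (X t))) = mkC (m + 3) (X t)
  rw [G_mk, psi_X, F_mk, phi_g]

end Stmt7Aux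


/-- For `d = m + 3 ≥ 3`, the ℚ-algebra homomorphism from
`ℚ[x_{ij} : 1 ≤ i < j ≤ d−1] / (x_{ij}², x_{ij}x_{jk} − x_{ij}x_{ik} − x_{jk}x_{ik})`
to `R = ℚ[ω_{ijk}]/I` sending `x_{ij}` to the class of `ω_{ijd}` is well-defined
(expressed by its existence) and is an isomorphism of ℚ-algebras. -/
theorem stmt_7 (m : ℕ) :
    ∃ F : FZRing (m + 2) →ₐ[ℚ] ConfRing (m + 3),
      (∀ p : P2 (m + 2),
        F (Ideal.Quotient.mk (Ideal.span (relFZ (m + 2))) (X p)) =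
          Ideal.Quotient.mk (Ideal.span (relOmega (m + 3))) (X (toTri m p))) ∧
      Function.Bijective F := by
  refine ⟨Stmt7Aux.F m, fun p => ?_, ?_, ?_⟩
  · rw [Stmt7Aux.F_mk, Stmt7Aux.phi_X]
  · intro x y h
    have hx := AlgHom.congr_fun (Stmt7Aux.GF (m := m)) x
    have hy := AlgHom.congr_fun (Stmt7Aux.GF (m := m)) y
    simp only [AlgHom.coe_comp, Function.comp_apply, AlgHom.id_apply] at hx hy
    rw [← hx, ← hy, h]
  · intro y
    refine ⟨Stmt7Aux.G m y, ?_⟩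
    have := AlgHom.congr_fun (Stmt7Aux.FG (m := m)) y
    simpa only [AlgHom.coe_comp, Function.comp_apply, AlgHom.id_apply] using this
end

section
/- Let K be a field, let d ≥ 1 be an integer, and let M be a K-vector space equipped with an internal direct sum decomposition M = ⊕_{i∈ℕ} M_i into K-subspaces. Let φ : M → M be an injective K-linear map satisfying φ(M_i) ⊆ M_{i+d} for all i ∈ ℕ. Then M, regarded as a module over the polynomial ring K[X] with X acting as φ, is a free K[X]-module. -/
open Polynomial Module

section Aux

variable {K M : Type*} [Field K] [AddCommGroup M] [Module K M]
    (Mi : ℕ → Submodule K M) (hint : DirectSum.IsInternal Mi)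

/-- Components of an element of a graded sup of submodules lie in the pieces. -/
theorem aux_comp_mem (A : ℕ → Submodule K M) (hA : ∀ i, A i ≤ Mi i)
    {x : M} (hx : x ∈ ⨆ i, A i) (i : ℕ) :
    (((LinearEquiv.ofBijective (DirectSum.coeLinearMap Mi) hint).symm x i : M)) ∈ A i := by
  classical
  revert i
  refine Submodule.iSup_induction (motive := fun x =>
    ∀ i, (((LinearEquiv.ofBijective (DirectSum.coeLinearMap Mi) hint).symm x i : M)) ∈ A i)
    A hx ?_ ?_ ?_
  · intro j x hxj i
    have hxM : x ∈ Mi j := hA j hxj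
    rcases eq_or_ne i j with rfl | hne
    · rw [hint.ofBijective_coeLinearMap_of_mem hxM]
      exact hxj
    · rw [hint.ofBijective_coeLinearMap_of_mem_ne hne.symm hxM]
      simp
  · intro i
    simp
  · intro x y hx hy i
    rw [map_add, DirectSum.add_apply]
    exact add_mem (hx i) (hy i)

theorem aux_eq_zero {x : M}
    (h : ∀ i, (((LinearEquiv.ofBijective (DirectSum.coeLinearMap Mi) hint).symm x i : M)) = 0) :
    x = 0 := by
  classical
  have h0 : (LinearEquiv.ofBijective (DirectSum.coeLinearMap Mi) hint).symm x = 0 := by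
    refine DFinsupp.ext fun i => ?_
    exact_mod_cast h i
  have := congrArg (LinearEquiv.ofBijective (DirectSum.coeLinearMap Mi) hint) h0
  simpa using this

end Aux

/-- Let `K` be a field, `d ≥ 1`, and `M` a `K`-vector space with an internal direct sum
decomposition `M = ⊕_{i∈ℕ} M_i`.  If `φ : M → M` is an injective `K`-linear map with
`φ(M_i) ⊆ M_{i+d}` for all `i`, then `M`, regarded as a `K[X]`-module with `X` acting as
`φ`, is a free `K[X]`-module. -/
theorem stmt_11 {K M : Type*} [Field K] [AddCommGroup M] [Module K M]
    (d : ℕ) (hd : 1 ≤ d) (Mi : ℕ → Submodule K M)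
    (hint : DirectSum.IsInternal Mi)
    (φ : M →ₗ[K] M) (hinj : Function.Injective φ)
    (hφ : ∀ i, (Mi i).map φ ≤ Mi (i + d)) :
    Module.Free (Polynomial K) (Module.AEval' φ) := by
  classical
  set F : Submodule K M := LinearMap.range φ with hF
  -- the graded pieces of the range of φ
  set A : ℕ → Submodule K M := fun i => if d ≤ i then (Mi (i - d)).map φ else ⊥ with hA
  have hAle : ∀ i, A i ≤ Mi i := by
    intro i
    rw [hA]; dsimp only
    split_ifs with h
    · have := hφ (i - d)
      rwa [Nat.sub_add_cancel h] at this
    · exact bot_le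
  have hFA : F = ⨆ i, A i := by
    apply le_antisymm
    · rintro x ⟨m, rfl⟩
      have hm : m ∈ ⨆ i, Mi i := by rw [hint.submodule_iSup_eq_top]; trivial
      have hmap : (⨆ i, Mi i).map φ ≤ ⨆ i, A i := by
        rw [Submodule.map_iSup]
        refine iSup_le fun j => ?_
        refine le_trans ?_ (le_iSup A (j + d))
        rw [hA]; dsimp only
        rw [if_pos (Nat.le_add_left d j), Nat.add_sub_cancel]
      exact hmap ⟨m, hm, rfl⟩
    · refine iSup_le fun i => ?_
      rw [hA]; dsimp only
      split_ifs
      · exact LinearMap.map_le_range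
      · exact bot_le
  -- choose graded complements of F inside each Mi i
  have hC : ∀ i, ∃ Ci : Submodule K M, Ci ≤ Mi i ∧ Ci ⊓ F = ⊥ ∧ (F ⊓ Mi i) ⊔ Ci = Mi i := by
    intro i
    obtain ⟨T, hT⟩ := Submodule.exists_isCompl (F.comap (Mi i).subtype)
    refine ⟨T.map (Mi i).subtype, Submodule.map_subtype_le _ _, ?_, ?_⟩
    · rw [Submodule.eq_bot_iff]
      rintro x ⟨hx1, hx2⟩
      obtain ⟨t, ht, rfl⟩ := hx1
      have htS : t ∈ F.comap (Mi i).subtype := hx2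
      have : t ∈ F.comap (Mi i).subtype ⊓ T := ⟨htS, ht⟩
      rw [hT.inf_eq_bot] at this
      rw [Submodule.mem_bot] at this
      simp [this]
    · have hmc : Submodule.map (Mi i).subtype (Submodule.comap (Mi i).subtype F) = Mi i ⊓ F :=
        Submodule.map_comap_subtype _ _
      rw [inf_comm F (Mi i), ← hmc, ← Submodule.map_sup, hT.sup_eq_top, Submodule.map_top, Submodule.range_subtype]
  choose Ci hCle hCdisj hCsup using hC
  set Cs : Submodule K M := ⨆ i, Ci i with hCs
  -- Cs is disjoint from F
  have hCsF : Cs ⊓ F = ⊥ := by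
    rw [Submodule.eq_bot_iff]
    rintro x ⟨hx1, hx2⟩
    refine aux_eq_zero Mi hint fun i => ?_
    have h1 := aux_comp_mem Mi hint Ci hCle hx1 i
    have h2 := aux_comp_mem Mi hint A hAle (hFA ▸ hx2) i
    have h2' : ((((LinearEquiv.ofBijective (DirectSum.coeLinearMap Mi) hint).symm x) i : M)) ∈ F := by
      rw [hFA]
      exact le_iSup A i h2
    have hb : ((((LinearEquiv.ofBijective (DirectSum.coeLinearMap Mi) hint).symm x) i : M)) ∈ Ci i ⊓ F := ⟨h1, h2'⟩
    rw [hCdisj i] at hb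
    exact (Submodule.mem_bot K).mp hb
  -- a basis of Cs over K
  set b := Basis.ofVectorSpace K ↥Cs with hb
  set v : (Basis.ofVectorSpaceIndex K ↥Cs) → Module.AEval' φ :=
    fun j => Module.AEval'.of φ ((b j : ↥Cs) : M) with hv
  -- the K-submodule of M corresponding to the K[X]-span of v
  set P : Submodule K M := Submodule.comap (Module.AEval'.of φ : M →ₗ[K] Module.AEval' φ)
    ((Submodule.span (Polynomial K) (Set.range v)).restrictScalars K) with hP
  have hmemP : ∀ x : M, x ∈ P ↔
      Module.AEval'.of φ x ∈ Submodule.span (Polynomial K) (Set.range v) := fun x => Iff.rfl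
  have hCP : Cs ≤ P := by
    have hspan : Submodule.span K (Set.range fun j => ((b j : ↥Cs) : M)) = Cs := by
      have : (Set.range fun j => ((b j : ↥Cs) : M)) = Cs.subtype '' Set.range b := by
        rw [← Set.range_comp]; rfl
      rw [this, ← Submodule.map_span, b.span_eq, Submodule.map_top, Submodule.range_subtype]
    rw [← hspan]
    rw [Submodule.span_le]
    rintro x ⟨j, rfl⟩
    rw [SetLike.mem_coe, hmemP]
    exact Submodule.subset_span ⟨j, rfl⟩
  have hφP : ∀ x ∈ P, φ x ∈ P := by
    intro x hx
    rw [hmemP] at hx ⊢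
    rw [← Module.AEval'.X_smul_of]
    exact Submodule.smul_mem _ _ hx
  -- spanning: every Mi n is contained in P
  have hMP : ∀ n, Mi n ≤ P := by
    intro n
    induction n using Nat.strong_induction_on with
    | _ n IH =>
      intro x hx
      rw [← hCsup n] at hx
      rcases Submodule.mem_sup.mp hx with ⟨y, hy, c, hc, rfl⟩
      refine add_mem ?_ (hCP (Submodule.mem_iSup_of_mem n hc))
      -- y ∈ F ⊓ Mi n, hence y ∈ A n
      have hyA : y ∈ A n := by
        have h1 := aux_comp_mem Mi hint A hAle (hFA ▸ hy.1) n
        rwa [hint.ofBijective_coeLinearMap_of_mem hy.2] at h1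
      rw [hA] at hyA; dsimp only at hyA
      split_ifs at hyA with hdn
      · obtain ⟨m, hm, rfl⟩ := hyA
        have hlt : n - d < n := Nat.sub_lt (lt_of_lt_of_le hd hdn) hd
        exact hφP m (IH _ hlt hm)
      · rw [Submodule.mem_bot] at hyA
        rw [hyA]; exact zero_mem P
  have hspan_top : ⊤ ≤ Submodule.span (Polynomial K) (Set.range v) := by
    intro x _
    have hm : (Module.AEval'.of φ).symm x ∈ ⨆ i, Mi i := by
      rw [hint.submodule_iSup_eq_top]; trivial
    have hxP : (Module.AEval'.of φ).symm x ∈ P := by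
      refine (iSup_le hMP : (⨆ i, Mi i) ≤ P) hm
    rw [hmemP] at hxP
    simpa using hxP
  -- a helper: linear combinations with constant coefficients land in Cs
  have hCsmul : ∀ c : (Basis.ofVectorSpaceIndex K ↥Cs) →₀ K,
      Finsupp.linearCombination (Polynomial K) v (c.mapRange Polynomial.C Polynomial.C_0) =
        Module.AEval'.of φ ((Finsupp.linearCombination K b c : ↥Cs) : M) := by
    intro c
    induction c using Finsupp.induction_linear with
    | zero => simp
    | add f g hf hg =>
      have hmr : (f + g).mapRange Polynomial.C Polynomial.C_0 =
          f.mapRange Polynomial.C Polynomial.C_0 + g.mapRange Polynomial.C Polynomial.C_0 :=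
        Finsupp.mapRange_add (fun a b => by simp) f g
      rw [hmr, map_add, hf, hg, map_add]
      push_cast
      rw [map_add]
    | single j k =>
      rw [Finsupp.mapRange_single, Finsupp.linearCombination_single,
        Finsupp.linearCombination_single, Module.AEval.C_smul]
      rw [hv]
      dsimp only
      rw [← map_smul]
      congr 1
  -- linear independence of v over K[X]
  have hindep : LinearIndependent (Polynomial K) v := by
    rw [linearIndependent_iff]
    intro l hl
    suffices h : ∀ N : ℕ, ∀ l : (Basis.ofVectorSpaceIndex K ↥Cs) →₀ Polynomial K,
        (∀ j, (l j).natDegree ≤ N) →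
        Finsupp.linearCombination (Polynomial K) v l = 0 → l = 0 by
      refine h (l.support.sup fun j => (l j).natDegree) l (fun j => ?_) hl
      by_cases hj : j ∈ l.support
      · exact Finset.le_sup (f := fun j => (l j).natDegree) hj
      · rw [Finsupp.notMem_support_iff.mp hj]; simp
    -- key step: split off the constant part
    have step : ∀ l : (Basis.ofVectorSpaceIndex K ↥Cs) →₀ Polynomial K,
        Finsupp.linearCombination (Polynomial K) v l = 0 →
        (∀ j, (l j).coeff 0 = 0) ∧
        Finsupp.linearCombination (Polynomial K) v
          (l.mapRange Polynomial.divX Polynomial.divX_zero) = 0 := by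
      intro l hl
      set c : (Basis.ofVectorSpaceIndex K ↥Cs) →₀ K :=
        l.mapRange (fun p => p.coeff 0) (Polynomial.coeff_zero 0) with hc
      set l' := l.mapRange Polynomial.divX Polynomial.divX_zero with hl'
      have hdec : l = (Polynomial.X : Polynomial K) • l' + c.mapRange Polynomial.C Polynomial.C_0 := by
        ext j
        rw [Finsupp.add_apply, Finsupp.smul_apply, Finsupp.mapRange_apply,
          Finsupp.mapRange_apply, hc, Finsupp.mapRange_apply, smul_eq_mul,
          Polynomial.X_mul_divX_add]
      rw [hdec, map_add, map_smul, hCsmul] at hl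
      set t : ↥Cs := Finsupp.linearCombination K b c with ht
      set y : M := (Module.AEval'.of φ).symm
        (Finsupp.linearCombination (Polynomial K) v l') with hy
      have hl2 : φ y + (t : M) = 0 := by
        have := congrArg (Module.AEval'.of φ).symm hl
        rw [map_add, map_zero] at this
        rw [Module.AEval.of_symm_X_smul] at this
        simpa [hy] using this
      have htF : (t : M) ∈ F := by
        refine ⟨-y, ?_⟩
        rw [map_neg]
        exact neg_eq_of_add_eq_zero_right hl2
      have ht0 : (t : M) = 0 := by
        have hmem : (t : M) ∈ Cs ⊓ F := ⟨t.2, htF⟩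
        rw [hCsF] at hmem
        exact (Submodule.mem_bot K).mp hmem
      have hc0 : c = 0 := by
        have hT0 : t = 0 := Subtype.ext ht0
        rw [ht] at hT0
        exact linearIndependent_iff.mp b.linearIndependent c hT0
      have hy0 : y = 0 := by
        apply hinj
        rw [map_zero]
        have h2 := hl2
        rw [ht0, add_zero] at h2
        exact h2
      have hLC0 : Finsupp.linearCombination (Polynomial K) v l' = 0 := by
        apply (Module.AEval'.of φ).symm.injective
        rw [map_zero, ← hy]
        exact hy0
      refine ⟨fun j => ?_, hLC0⟩
      have hcj := Finsupp.ext_iff.mp hc0 j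
      rwa [hc, Finsupp.mapRange_apply, Finsupp.zero_apply] at hcj
    intro N
    induction N with
    | zero =>
      intro l hN hl0
      obtain ⟨h1, h2⟩ := step l hl0
      ext j
      have hdeg : (l j).natDegree = 0 := Nat.le_zero.mp (hN j)
      have hlj : l j = Polynomial.C ((l j).coeff 0) :=
        Polynomial.eq_C_of_natDegree_eq_zero hdeg
      rw [Finsupp.zero_apply, hlj, h1 j, Polynomial.C_0]
    | succ N IH =>
      intro l hN hl0
      obtain ⟨h1, h2⟩ := step l hl0
      have hl'0 : l.mapRange Polynomial.divX Polynomial.divX_zero = 0 := by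
        refine IH _ (fun j => ?_) h2
        rw [Finsupp.mapRange_apply, Polynomial.natDegree_divX_eq_natDegree_tsub_one]
        exact Nat.sub_le_of_le_add (hN j)
      ext j
      have hdx : (l j).divX = 0 := by
        have hh := Finsupp.ext_iff.mp hl'0 j
        rwa [Finsupp.mapRange_apply, Finsupp.zero_apply] at hh
      rw [Finsupp.zero_apply, ← Polynomial.X_mul_divX_add (l j), hdx, h1 j]
      simp
  exact Module.Free.of_basis (Basis.mk hindep hspan_top)
end

section
/- Let R_4^δ be as defined (case d = 4 of R_d^δ), and set w := (c_{123} − c_{124})/2, z₁ := (c_{123} + c_{124})/2, and z₂ := (c_{342} + c_{341})/2 in R_4^δ. Then in R_4^δ one has w z₁ = 0, w z₂ = 0, z₁² = z₂², w = (c_{342} − c_{341})/2, and δ = w² + z₁²; moreover the ℚ-algebra homomorphism from ℚ[W, Z₁, Z₂] / (Z₁² − Z₂², W Z₁, W Z₂) to R_4^δ sending W ↦ w, Z₁ ↦ z₁, Z₂ ↦ z₂ is well-defined and is an isomorphism of ℚ-algebras. -/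
open MvPolynomial

/-- The relations defining `R_d^δ`: the generator `X none` is `δ` and `X (some t)` is
`c_t`; the relations are `c_{ijk} + c_{jik}`, `c_{ijk} − c_{jki}`, `c_{ijk}² − δ`, and
`c_{ijk} − c_{ijl} − c_{jkl} − c_{kil}`. -/
def relC (d : ℕ) : Set (MvPolynomial (Option (Tri d)) ℚ) :=
  (Set.range fun t : Tri d => X (some t) + X (some t.sw)) ∪
  (Set.range fun t : Tri d => X (some t) - X (some t.cyc)) ∪
  (Set.range fun t : Tri d => (X (some t)) ^ 2 - X none) ∪
  (Set.range fun q : Quad d => X (some q.t₁) - X (some q.t₂) - X (some q.t₃) - X (some q.t₄))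

/-- The presented ring `R_d^δ`. -/
abbrev Rdelta (d : ℕ) : Type :=
  MvPolynomial (Option (Tri d)) ℚ ⧸ Ideal.span (relC d)

/-- The class of the generator `c_{ijk}` in `R₄^δ`. -/
noncomputable def cR (t : Tri 4) : Rdelta 4 :=
  Ideal.Quotient.mk (Ideal.span (relC 4)) (X (some t))

/-- The class of the generator `δ` in `R₄^δ`. -/
noncomputable def δR : Rdelta 4 :=
  Ideal.Quotient.mk (Ideal.span (relC 4)) (X none)

/-- The triple `(1,2,3)` (0-indexed: `(0,1,2)`). -/
def t123 : Tri 4 := ⟨(0, 1, 2), by decide⟩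
/-- The triple `(1,2,4)` (0-indexed: `(0,1,3)`). -/
def t124 : Tri 4 := ⟨(0, 1, 3), by decide⟩
/-- The triple `(3,4,2)` (0-indexed: `(2,3,1)`). -/
def t342 : Tri 4 := ⟨(2, 3, 1), by decide⟩
/-- The triple `(3,4,1)` (0-indexed: `(2,3,0)`). -/
def t341 : Tri 4 := ⟨(2, 3, 0), by decide⟩

/-- `w := (c_{123} − c_{124})/2`. -/
noncomputable def wR : Rdelta 4 := (1 / 2 : ℚ) • (cR t123 - cR t124)
/-- `z₁ := (c_{123} + c_{124})/2`. -/
noncomputable def z₁R : Rdelta 4 := (1 / 2 : ℚ) • (cR t123 + cR t124)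
/-- `z₂ := (c_{342} + c_{341})/2`. -/
noncomputable def z₂R : Rdelta 4 := (1 / 2 : ℚ) • (cR t342 + cR t341)


/- ------------------------------------------------------------------ -/
/- Auxiliary development                                               -/
/- ------------------------------------------------------------------ -/

instance : DecidableEq (Tri 4) := by unfold Tri; infer_instance
instance : Fintype (Tri 4) := by unfold Tri; infer_instance
instance : DecidableEq (Quad 4) := by unfold Quad; infer_instance
instance : Fintype (Quad 4) := by unfold Quad; infer_instance

set_option maxHeartbeats 1600000
set_option synthInstance.maxHeartbeats 400000

namespace Stmt13Aux

lemma v4_0 : ((0 : Fin 4)).val = 0 := rfl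
lemma v4_1 : ((1 : Fin 4)).val = 1 := rfl
lemma v4_2 : ((2 : Fin 4)).val = 2 := rfl
lemma v4_3 : ((3 : Fin 4)).val = 3 := rfl

abbrev P3 := MvPolynomial (Fin 3) ℚ

noncomputable abbrev J : Ideal P3 :=
  Ideal.span {(X 1 : P3) ^ 2 - (X 2) ^ 2, X 0 * X 1, X 0 * X 2}

noncomputable abbrev Aq := P3 ⧸ J

noncomputable def aW : Aq := Ideal.Quotient.mk J (X 0)
noncomputable def bZ : Aq := Ideal.Quotient.mk J (X 1)
noncomputable def cZ : Aq := Ideal.Quotient.mk J (X 2)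

lemma hab : aW * bZ = 0 := by
  rw [aW, bZ, ← map_mul]
  exact Ideal.Quotient.eq_zero_iff_mem.mpr
    (Ideal.subset_span (Set.mem_insert_of_mem _ (Set.mem_insert _ _)))

lemma hac : aW * cZ = 0 := by
  rw [aW, cZ, ← map_mul]
  exact Ideal.Quotient.eq_zero_iff_mem.mpr
    (Ideal.subset_span (Set.mem_insert_of_mem _ (Set.mem_insert_of_mem _ rfl)))

lemma hbc : bZ ^ 2 = cZ ^ 2 := by
  rw [bZ, cZ, ← map_pow, ← map_pow, ← sub_eq_zero, ← map_sub]
  exact Ideal.Quotient.eq_zero_iff_mem.mpr (Ideal.subset_span (Set.mem_insert _ _))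

noncomputable def gfun : Option (Tri 4) → Aq
  | none => aW ^ 2 + bZ ^ 2
  | some t =>
    (if t.1.1.val < t.1.2.1.val then 1 else -1) * (if t.1.1.val < t.1.2.2.val then 1 else -1) *
      (if t.1.2.1.val < t.1.2.2.val then 1 else -1) *
      (if 6 - (t.1.1.val + t.1.2.1.val + t.1.2.2.val) = 0 then cZ + aW
       else if 6 - (t.1.1.val + t.1.2.1.val + t.1.2.2.val) = 1 then cZ - aW
       else if 6 - (t.1.1.val + t.1.2.1.val + t.1.2.2.val) = 2 then bZ - aW
       else bZ + aW)

/-- the relations vanish under `aeval gfun` -/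
lemma gzero : ∀ x ∈ relC 4, (aeval gfun : MvPolynomial (Option (Tri 4)) ℚ →ₐ[ℚ] Aq) x = 0 := by
  rintro x (((⟨t, rfl⟩ | ⟨t, rfl⟩) | ⟨t, rfl⟩) | ⟨q, rfl⟩)
  · simp only [map_add, aeval_X]
    fin_cases t <;> norm_num [Tri.sw, gfun] <;> ring
  · simp only [map_sub, aeval_X]
    fin_cases t <;> norm_num [Tri.cyc, gfun] <;> ring
  · simp only [map_sub, map_pow, aeval_X]
    fin_cases t <;> norm_num [gfun] <;>
      first
        | linear_combination 2 * hab
        | linear_combination -2 * hab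
        | linear_combination 2 * hac - hbc
        | linear_combination -2 * hac - hbc
        | linear_combination hbc
        | linear_combination -hbc
  · simp only [map_sub, aeval_X]
    fin_cases q <;> norm_num [Quad.t₁, Quad.t₂, Quad.t₃, Quad.t₄, gfun] <;> ring

noncomputable def G : Rdelta 4 →ₐ[ℚ] Aq :=
  Ideal.Quotient.liftₐ (Ideal.span (relC 4)) (aeval gfun : MvPolynomial (Option (Tri 4)) ℚ →ₐ[ℚ] Aq)
    (fun a ha => RingHom.mem_ker.mp
      ((Ideal.span_le.mpr fun x hx => RingHom.mem_ker.mpr (gzero x hx)) ha))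

lemma G_mk (p : MvPolynomial (Option (Tri 4)) ℚ) :
    G (Ideal.Quotient.mk (Ideal.span (relC 4)) p) = aeval gfun p := by
  simp [G, Ideal.Quotient.liftₐ_apply, Ideal.Quotient.lift_mk]
  rfl

/- Rdelta side basic lemmas -/

lemma mkc (t : Tri 4) :
    Ideal.Quotient.mk (Ideal.span (relC 4)) (X (some t)) = cR t := rfl

lemma hsw (t : Tri 4) : cR t.sw = -cR t := by
  have h : Ideal.Quotient.mk (Ideal.span (relC 4)) (X (some t) + X (some t.sw)) = 0 :=
    Ideal.Quotient.eq_zero_iff_mem.mpr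
      (Ideal.subset_span (Or.inl (Or.inl (Or.inl ⟨t, rfl⟩))))
  rw [map_add, mkc, mkc] at h
  exact eq_neg_of_add_eq_zero_right h

lemma hcyc (t : Tri 4) : cR t.cyc = cR t := by
  have h : Ideal.Quotient.mk (Ideal.span (relC 4)) (X (some t) - X (some t.cyc)) = 0 :=
    Ideal.Quotient.eq_zero_iff_mem.mpr
      (Ideal.subset_span (Or.inl (Or.inl (Or.inr ⟨t, rfl⟩))))
  rw [map_sub, mkc, mkc] at h
  exact (sub_eq_zero.mp h).symm

lemma hsq (t : Tri 4) : cR t ^ 2 = δR := by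
  have h : Ideal.Quotient.mk (Ideal.span (relC 4)) ((X (some t)) ^ 2 - X none) = 0 :=
    Ideal.Quotient.eq_zero_iff_mem.mpr
      (Ideal.subset_span (Or.inl (Or.inr ⟨t, rfl⟩)))
  rw [map_sub, map_pow, mkc] at h
  exact sub_eq_zero.mp h

lemma hquad (q : Quad 4) : cR q.t₁ - cR q.t₂ - cR q.t₃ - cR q.t₄ = 0 := by
  have h : Ideal.Quotient.mk (Ideal.span (relC 4))
      (X (some q.t₁) - X (some q.t₂) - X (some q.t₃) - X (some q.t₄)) = 0 :=
    Ideal.Quotient.eq_zero_iff_mem.mpr (Ideal.subset_span (Or.inr ⟨q, rfl⟩))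
  rw [map_sub, map_sub, map_sub, mkc, mkc, mkc, mkc] at h
  exact h

noncomputable def half : Rdelta 4 := algebraMap ℚ (Rdelta 4) (1 / 2)

lemma h2 : half + half = 1 := by
  rw [show half = algebraMap ℚ (Rdelta 4) (1 / 2) from rfl, ← map_add]
  norm_num

lemma hsm (x : Rdelta 4) : (1 / 2 : ℚ) • x = half * x := by
  have h := Algebra.smul_def (R := ℚ) (A := Rdelta 4) (1 / 2 : ℚ) x
  exact h

def q0 : Quad 4 := ⟨(0, 1, 2, 3), by decide⟩

lemma hk : cR t123 - cR t124 - cR t342 + cR t341 = 0 := by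
  have h := hquad q0
  rw [show q0.t₁ = t123 from rfl, show q0.t₂ = t124 from rfl,
    show q0.t₃ = t342.cyc.cyc from rfl, show q0.t₄ = (t341.sw).cyc from rfl,
    hcyc, hcyc, hcyc, hsw] at h
  linear_combination h

lemma e3 : cR t123 = z₁R + wR := by
  rw [z₁R, wR, hsm, hsm]
  linear_combination (-cR t123) * h2

lemma e2 : cR t124 = z₁R - wR := by
  rw [z₁R, wR, hsm, hsm]
  linear_combination (-cR t124) * h2

lemma e0 : cR t342 = z₂R + wR := by
  rw [z₂R, wR, hsm, hsm]
  linear_combination (-half) * hk + (-cR t342) * h2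

lemma e1 : cR t341 = z₂R - wR := by
  rw [z₂R, wR, hsm, hsm]
  linear_combination half * hk + (-cR t341) * h2

lemma L1 : wR * z₁R = 0 := by
  rw [z₁R, wR, hsm, hsm]
  linear_combination half ^ 2 * hsq t123 - half ^ 2 * hsq t124

lemma L2 : wR * z₂R = 0 := by
  rw [z₂R, wR, hsm, hsm]
  linear_combination half ^ 2 * (cR t342 + cR t341) * hk
    + half ^ 2 * hsq t342 - half ^ 2 * hsq t341

lemma L3 : z₁R ^ 2 = z₂R ^ 2 := by
  rw [z₁R, z₂R, hsm, hsm]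
  linear_combination (2 * half ^ 2) * hsq t123 + 2 * half ^ 2 * hsq t124
    - 2 * half ^ 2 * hsq t342 - 2 * half ^ 2 * hsq t341
    - half ^ 2 * (cR t123 - cR t124 + cR t342 - cR t341) * hk

lemma L4 : wR = (1 / 2 : ℚ) • (cR t342 - cR t341) := by
  rw [wR, hsm, hsm]
  linear_combination half * hk

lemma L5 : δR = wR ^ 2 + z₁R ^ 2 := by
  rw [z₁R, wR, hsm, hsm]
  linear_combination (-2) * half ^ 2 * hsq t123 - 2 * half ^ 2 * hsq t124
    - δR * (2 * half + 1) * h2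

noncomputable def vfun : Fin 3 → Rdelta 4 := ![wR, z₁R, z₂R]

lemma vf0 : vfun 0 = wR := rfl
lemma vfm0 : vfun ⟨0, by omega⟩ = wR := rfl
lemma vfm1 : vfun ⟨1, by omega⟩ = z₁R := rfl
lemma vfm2 : vfun ⟨2, by omega⟩ = z₂R := rfl
lemma vf1 : vfun 1 = z₁R := rfl
lemma vf2 : vfun 2 = z₂R := rfl

lemma fzero : ∀ a ∈ J, (aeval vfun : P3 →ₐ[ℚ] Rdelta 4) a = 0 := by
  intro a ha
  refine RingHom.mem_ker.mp ((Ideal.span_le.mpr ?_) ha)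
  rintro x (rfl | rfl | rfl) <;> refine RingHom.mem_ker.mpr ?_
  · simp only [map_sub, map_pow, aeval_X, vf1, vf2]
    rw [L3, sub_self]
  · simp only [map_mul, aeval_X, vf0, vf1]
    exact L1
  · simp only [map_mul, aeval_X, vf0, vf2]
    exact L2

noncomputable def F : Aq →ₐ[ℚ] Rdelta 4 :=
  Ideal.Quotient.liftₐ J (aeval vfun) fzero

lemma F_mk (p : P3) : F (Ideal.Quotient.mk J p) = aeval vfun p := by
  simp [F, Ideal.Quotient.liftₐ_apply, Ideal.Quotient.lift_mk]
  rfl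

lemma FaW : F aW = wR := by rw [aW, F_mk, aeval_X, vf0]
lemma FbZ : F bZ = z₁R := by rw [bZ, F_mk, aeval_X, vf1]
lemma FcZ : F cZ = z₂R := by rw [cZ, F_mk, aeval_X, vf2]

lemma c012 : cR (⟨(⟨0, by omega⟩, ⟨1, by omega⟩, ⟨2, by omega⟩), by decide⟩ : Tri 4) = (z₁R + wR) := e3
lemma c013 : cR (⟨(⟨0, by omega⟩, ⟨1, by omega⟩, ⟨3, by omega⟩), by decide⟩ : Tri 4) = (z₁R - wR) := e2
lemma c021 : cR (⟨(⟨0, by omega⟩, ⟨2, by omega⟩, ⟨1, by omega⟩), by decide⟩ : Tri 4) = -(z₁R + wR) := by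
  rw [show (⟨(⟨0, by omega⟩, ⟨2, by omega⟩, ⟨1, by omega⟩), by decide⟩ : Tri 4) = t123.cyc.cyc.sw from rfl, hsw, hcyc, hcyc, e3]
lemma c023 : cR (⟨(⟨0, by omega⟩, ⟨2, by omega⟩, ⟨3, by omega⟩), by decide⟩ : Tri 4) = (z₂R - wR) := by
  rw [show (⟨(⟨0, by omega⟩, ⟨2, by omega⟩, ⟨3, by omega⟩), by decide⟩ : Tri 4) = t341.cyc.cyc from rfl, hcyc, hcyc, e1]
lemma c031 : cR (⟨(⟨0, by omega⟩, ⟨3, by omega⟩, ⟨1, by omega⟩), by decide⟩ : Tri 4) = -(z₁R - wR) := by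
  rw [show (⟨(⟨0, by omega⟩, ⟨3, by omega⟩, ⟨1, by omega⟩), by decide⟩ : Tri 4) = t124.cyc.cyc.sw from rfl, hsw, hcyc, hcyc, e2]
lemma c032 : cR (⟨(⟨0, by omega⟩, ⟨3, by omega⟩, ⟨2, by omega⟩), by decide⟩ : Tri 4) = -(z₂R - wR) := by
  rw [show (⟨(⟨0, by omega⟩, ⟨3, by omega⟩, ⟨2, by omega⟩), by decide⟩ : Tri 4) = t341.cyc.sw from rfl, hsw, hcyc, e1]
lemma c102 : cR (⟨(⟨1, by omega⟩, ⟨0, by omega⟩, ⟨2, by omega⟩), by decide⟩ : Tri 4) = -(z₁R + wR) := by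
  rw [show (⟨(⟨1, by omega⟩, ⟨0, by omega⟩, ⟨2, by omega⟩), by decide⟩ : Tri 4) = t123.sw from rfl, hsw, e3]
lemma c103 : cR (⟨(⟨1, by omega⟩, ⟨0, by omega⟩, ⟨3, by omega⟩), by decide⟩ : Tri 4) = -(z₁R - wR) := by
  rw [show (⟨(⟨1, by omega⟩, ⟨0, by omega⟩, ⟨3, by omega⟩), by decide⟩ : Tri 4) = t124.sw from rfl, hsw, e2]
lemma c120 : cR (⟨(⟨1, by omega⟩, ⟨2, by omega⟩, ⟨0, by omega⟩), by decide⟩ : Tri 4) = (z₁R + wR) := by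
  rw [show (⟨(⟨1, by omega⟩, ⟨2, by omega⟩, ⟨0, by omega⟩), by decide⟩ : Tri 4) = t123.cyc from rfl, hcyc, e3]
lemma c123 : cR (⟨(⟨1, by omega⟩, ⟨2, by omega⟩, ⟨3, by omega⟩), by decide⟩ : Tri 4) = (z₂R + wR) := by
  rw [show (⟨(⟨1, by omega⟩, ⟨2, by omega⟩, ⟨3, by omega⟩), by decide⟩ : Tri 4) = t342.cyc.cyc from rfl, hcyc, hcyc, e0]
lemma c130 : cR (⟨(⟨1, by omega⟩, ⟨3, by omega⟩, ⟨0, by omega⟩), by decide⟩ : Tri 4) = (z₁R - wR) := by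
  rw [show (⟨(⟨1, by omega⟩, ⟨3, by omega⟩, ⟨0, by omega⟩), by decide⟩ : Tri 4) = t124.cyc from rfl, hcyc, e2]
lemma c132 : cR (⟨(⟨1, by omega⟩, ⟨3, by omega⟩, ⟨2, by omega⟩), by decide⟩ : Tri 4) = -(z₂R + wR) := by
  rw [show (⟨(⟨1, by omega⟩, ⟨3, by omega⟩, ⟨2, by omega⟩), by decide⟩ : Tri 4) = t342.cyc.sw from rfl, hsw, hcyc, e0]
lemma c201 : cR (⟨(⟨2, by omega⟩, ⟨0, by omega⟩, ⟨1, by omega⟩), by decide⟩ : Tri 4) = (z₁R + wR) := by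
  rw [show (⟨(⟨2, by omega⟩, ⟨0, by omega⟩, ⟨1, by omega⟩), by decide⟩ : Tri 4) = t123.cyc.cyc from rfl, hcyc, hcyc, e3]
lemma c203 : cR (⟨(⟨2, by omega⟩, ⟨0, by omega⟩, ⟨3, by omega⟩), by decide⟩ : Tri 4) = -(z₂R - wR) := by
  rw [show (⟨(⟨2, by omega⟩, ⟨0, by omega⟩, ⟨3, by omega⟩), by decide⟩ : Tri 4) = t341.cyc.cyc.sw from rfl, hsw, hcyc, hcyc, e1]
lemma c210 : cR (⟨(⟨2, by omega⟩, ⟨1, by omega⟩, ⟨0, by omega⟩), by decide⟩ : Tri 4) = -(z₁R + wR) := by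
  rw [show (⟨(⟨2, by omega⟩, ⟨1, by omega⟩, ⟨0, by omega⟩), by decide⟩ : Tri 4) = t123.cyc.sw from rfl, hsw, hcyc, e3]
lemma c213 : cR (⟨(⟨2, by omega⟩, ⟨1, by omega⟩, ⟨3, by omega⟩), by decide⟩ : Tri 4) = -(z₂R + wR) := by
  rw [show (⟨(⟨2, by omega⟩, ⟨1, by omega⟩, ⟨3, by omega⟩), by decide⟩ : Tri 4) = t342.cyc.cyc.sw from rfl, hsw, hcyc, hcyc, e0]
lemma c230 : cR (⟨(⟨2, by omega⟩, ⟨3, by omega⟩, ⟨0, by omega⟩), by decide⟩ : Tri 4) = (z₂R - wR) := e1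
lemma c231 : cR (⟨(⟨2, by omega⟩, ⟨3, by omega⟩, ⟨1, by omega⟩), by decide⟩ : Tri 4) = (z₂R + wR) := e0
lemma c301 : cR (⟨(⟨3, by omega⟩, ⟨0, by omega⟩, ⟨1, by omega⟩), by decide⟩ : Tri 4) = (z₁R - wR) := by
  rw [show (⟨(⟨3, by omega⟩, ⟨0, by omega⟩, ⟨1, by omega⟩), by decide⟩ : Tri 4) = t124.cyc.cyc from rfl, hcyc, hcyc, e2]
lemma c302 : cR (⟨(⟨3, by omega⟩, ⟨0, by omega⟩, ⟨2, by omega⟩), by decide⟩ : Tri 4) = (z₂R - wR) := by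
  rw [show (⟨(⟨3, by omega⟩, ⟨0, by omega⟩, ⟨2, by omega⟩), by decide⟩ : Tri 4) = t341.cyc from rfl, hcyc, e1]
lemma c310 : cR (⟨(⟨3, by omega⟩, ⟨1, by omega⟩, ⟨0, by omega⟩), by decide⟩ : Tri 4) = -(z₁R - wR) := by
  rw [show (⟨(⟨3, by omega⟩, ⟨1, by omega⟩, ⟨0, by omega⟩), by decide⟩ : Tri 4) = t124.cyc.sw from rfl, hsw, hcyc, e2]
lemma c312 : cR (⟨(⟨3, by omega⟩, ⟨1, by omega⟩, ⟨2, by omega⟩), by decide⟩ : Tri 4) = (z₂R + wR) := by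
  rw [show (⟨(⟨3, by omega⟩, ⟨1, by omega⟩, ⟨2, by omega⟩), by decide⟩ : Tri 4) = t342.cyc from rfl, hcyc, e0]
lemma c320 : cR (⟨(⟨3, by omega⟩, ⟨2, by omega⟩, ⟨0, by omega⟩), by decide⟩ : Tri 4) = -(z₂R - wR) := by
  rw [show (⟨(⟨3, by omega⟩, ⟨2, by omega⟩, ⟨0, by omega⟩), by decide⟩ : Tri 4) = t341.sw from rfl, hsw, e1]
lemma c321 : cR (⟨(⟨3, by omega⟩, ⟨2, by omega⟩, ⟨1, by omega⟩), by decide⟩ : Tri 4) = -(z₂R + wR) := by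
  rw [show (⟨(⟨3, by omega⟩, ⟨2, by omega⟩, ⟨1, by omega⟩), by decide⟩ : Tri 4) = t342.sw from rfl, hsw, e0]

lemma hcnone : F (gfun none) = δR := by
  rw [show gfun none = aW ^ 2 + bZ ^ 2 from rfl, map_add, map_pow, map_pow, FaW, FbZ]
  exact L5.symm

lemma hc (t : Tri 4) : F (gfun (some t)) = cR t := by
  fin_cases t
  all_goals
    first
      | (rw [c012]; norm_num [gfun, FaW, FbZ, FcZ]; try ring)
      | (rw [c013]; norm_num [gfun, FaW, FbZ, FcZ]; try ring)
      | (rw [c021]; norm_num [gfun, FaW, FbZ, FcZ]; try ring)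
      | (rw [c023]; norm_num [gfun, FaW, FbZ, FcZ]; try ring)
      | (rw [c031]; norm_num [gfun, FaW, FbZ, FcZ]; try ring)
      | (rw [c032]; norm_num [gfun, FaW, FbZ, FcZ]; try ring)
      | (rw [c102]; norm_num [gfun, FaW, FbZ, FcZ]; try ring)
      | (rw [c103]; norm_num [gfun, FaW, FbZ, FcZ]; try ring)
      | (rw [c120]; norm_num [gfun, FaW, FbZ, FcZ]; try ring)
      | (rw [c123]; norm_num [gfun, FaW, FbZ, FcZ]; try ring)
      | (rw [c130]; norm_num [gfun, FaW, FbZ, FcZ]; try ring)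
      | (rw [c132]; norm_num [gfun, FaW, FbZ, FcZ]; try ring)
      | (rw [c201]; norm_num [gfun, FaW, FbZ, FcZ]; try ring)
      | (rw [c203]; norm_num [gfun, FaW, FbZ, FcZ]; try ring)
      | (rw [c210]; norm_num [gfun, FaW, FbZ, FcZ]; try ring)
      | (rw [c213]; norm_num [gfun, FaW, FbZ, FcZ]; try ring)
      | (rw [c230]; norm_num [gfun, FaW, FbZ, FcZ]; try ring)
      | (rw [c231]; norm_num [gfun, FaW, FbZ, FcZ]; try ring)
      | (rw [c301]; norm_num [gfun, FaW, FbZ, FcZ]; try ring)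
      | (rw [c302]; norm_num [gfun, FaW, FbZ, FcZ]; try ring)
      | (rw [c310]; norm_num [gfun, FaW, FbZ, FcZ]; try ring)
      | (rw [c312]; norm_num [gfun, FaW, FbZ, FcZ]; try ring)
      | (rw [c320]; norm_num [gfun, FaW, FbZ, FcZ]; try ring)
      | (rw [c321]; norm_num [gfun, FaW, FbZ, FcZ]; try ring)

lemma hGF : G.comp F = AlgHom.id ℚ Aq := by
  apply Ideal.Quotient.algHom_ext
  apply MvPolynomial.algHom_ext
  intro i
  fin_cases i <;>
    simp only [AlgHom.comp_apply, Ideal.Quotient.mkₐ_eq_mk, AlgHom.id_apply, F_mk, aeval_X,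
      vf0, vf1, vf2, vfm0, vfm1, vfm2, wR, z₁R, z₂R, map_smul, map_sub, map_add]
  · rw [show cR t123 = Ideal.Quotient.mk (Ideal.span (relC 4)) (X (some t123)) from rfl,
      show cR t124 = Ideal.Quotient.mk (Ideal.span (relC 4)) (X (some t124)) from rfl,
      G_mk, G_mk, aeval_X, aeval_X]
    norm_num [gfun, t123, t124, v4_0, v4_1, v4_2, v4_3]
    rw [← add_smul]
    norm_num [aW]
  · rw [show cR t123 = Ideal.Quotient.mk (Ideal.span (relC 4)) (X (some t123)) from rfl,
      show cR t124 = Ideal.Quotient.mk (Ideal.span (relC 4)) (X (some t124)) from rfl,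
      G_mk, G_mk, aeval_X, aeval_X]
    norm_num [gfun, t123, t124, v4_0, v4_1, v4_2, v4_3]
    rw [← add_smul]
    norm_num [bZ]
  · rw [show cR t342 = Ideal.Quotient.mk (Ideal.span (relC 4)) (X (some t342)) from rfl,
      show cR t341 = Ideal.Quotient.mk (Ideal.span (relC 4)) (X (some t341)) from rfl,
      G_mk, G_mk, aeval_X, aeval_X]
    norm_num [gfun, t342, t341, v4_0, v4_1, v4_2, v4_3]
    rw [← add_smul]
    norm_num [cZ]
    rfl

lemma hFG : F.comp G = AlgHom.id ℚ (Rdelta 4) := by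
  apply Ideal.Quotient.algHom_ext
  apply MvPolynomial.algHom_ext
  intro v
  simp only [AlgHom.comp_apply, Ideal.Quotient.mkₐ_eq_mk, AlgHom.id_apply, G_mk, aeval_X]
  cases v with
  | none => exact hcnone
  | some t => exact hc t

end Stmt13Aux

/-- In `R₄^δ`, with `w = (c_{123} − c_{124})/2`, `z₁ = (c_{123} + c_{124})/2`,
`z₂ = (c_{342} + c_{341})/2`, one has `wz₁ = 0`, `wz₂ = 0`, `z₁² = z₂²`,
`w = (c_{342} − c_{341})/2`, `δ = w² + z₁²`; and the ℚ-algebra homomorphism from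
`ℚ[W,Z₁,Z₂]/(Z₁² − Z₂², WZ₁, WZ₂)` sending `W ↦ w`, `Z₁ ↦ z₁`, `Z₂ ↦ z₂` is
well-defined (expressed by its existence) and is an isomorphism of ℚ-algebras. -/
theorem stmt_13 :
    wR * z₁R = 0 ∧ wR * z₂R = 0 ∧ z₁R ^ 2 = z₂R ^ 2 ∧
    wR = (1 / 2 : ℚ) • (cR t342 - cR t341) ∧
    δR = wR ^ 2 + z₁R ^ 2 ∧
    ∃ F : (MvPolynomial (Fin 3) ℚ ⧸
        Ideal.span {(X 1 : MvPolynomial (Fin 3) ℚ) ^ 2 - (X 2) ^ 2,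
          X 0 * X 1, X 0 * X 2}) →ₐ[ℚ] Rdelta 4,
      F (Ideal.Quotient.mk _ (X 0)) = wR ∧
      F (Ideal.Quotient.mk _ (X 1)) = z₁R ∧
      F (Ideal.Quotient.mk _ (X 2)) = z₂R ∧
      Function.Bijective F := by
  refine ⟨Stmt13Aux.L1, Stmt13Aux.L2, Stmt13Aux.L3, Stmt13Aux.L4, Stmt13Aux.L5,
    Stmt13Aux.F, ?_, ?_, ?_, ?_⟩
  · rw [Stmt13Aux.F_mk, aeval_X, Stmt13Aux.vf0]
  · rw [Stmt13Aux.F_mk, aeval_X, Stmt13Aux.vf1]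
  · rw [Stmt13Aux.F_mk, aeval_X, Stmt13Aux.vf2]
  · constructor
    · exact Function.LeftInverse.injective
        (g := Stmt13Aux.G) fun x => by
          simpa using AlgHom.congr_fun Stmt13Aux.hGF x
    · exact Function.RightInverse.surjective
        (g := Stmt13Aux.G) fun x => by
          simpa using AlgHom.congr_fun Stmt13Aux.hFG x
end

section
/- Let R_4^δ be as defined (case d = 4 of R_d^δ), and set w := (c_{123} − c_{124})/2, z₁ := (c_{123} + c_{124})/2, and z₂ := (c_{342} + c_{341})/2 in R_4^δ. Then for every integer n ≥ 1 the three elements w^n, z₁^n, z₁^{n−1} z₂ of R_4^δ are linearly independent over ℚ. -/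
open MvPolynomial

section Aux

/-- Sign of a triple of distinct elements of `Fin 4`. -/
def sgn3 (i j k : Fin 4) : ℤ :=
  (if i < j then 1 else -1) * ((if i < k then 1 else -1) * (if j < k then 1 else -1))

/-- The element of `{0,1,2,3}` missing from a triple (as a natural number). -/
def miss (t : Tri 4) : ℕ := 6 - (t.1.1.val + t.1.2.1.val + t.1.2.2.val)

def eps1 (t : Tri 4) : ℤ :=
  sgn3 t.1.1 t.1.2.1 t.1.2.2 * (if miss t = 0 ∨ miss t = 3 then 1 else -1)

def eps2 (t : Tri 4) : ℤ := sgn3 t.1.1 t.1.2.1 t.1.2.2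

def eps3 (t : Tri 4) : ℤ :=
  sgn3 t.1.1 t.1.2.1 t.1.2.2 * (if 2 ≤ miss t then 1 else -1)

/-- Assignment of values to generators. -/
def asgn (ε : Tri 4 → ℤ) : Option (Tri 4) → ℚ := fun o => o.elim 1 (fun t => (ε t : ℚ))

lemma ker_cond (ε : Tri 4 → ℤ)
    (h1 : ∀ t : Tri 4, ε t + ε t.sw = 0)
    (h2 : ∀ t : Tri 4, ε t - ε t.cyc = 0)
    (h3 : ∀ t : Tri 4, ε t ^ 2 = 1)
    (h4 : ∀ q : Quad 4, ε q.t₁ - ε q.t₂ - ε q.t₃ - ε q.t₄ = 0) :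
    ∀ p ∈ Ideal.span (relC 4), aeval (asgn ε) p = 0 := by
  intro p hp
  have hle : Ideal.span (relC 4) ≤ RingHom.ker ((aeval (asgn ε) :
      MvPolynomial (Option (Tri 4)) ℚ →ₐ[ℚ] ℚ) : MvPolynomial (Option (Tri 4)) ℚ →+* ℚ) := by
    rw [Ideal.span_le]
    rintro x (((⟨t, rfl⟩ | ⟨t, rfl⟩) | ⟨t, rfl⟩) | ⟨q, rfl⟩) <;>
      simp only [SetLike.mem_coe, RingHom.mem_ker, map_add, map_sub, map_pow,
        RingHom.coe_coe, aeval_X] <;>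
      simp only [asgn, Option.elim]
    · exact_mod_cast congrArg (fun z : ℤ => (z : ℚ)) (h1 t)
    · exact_mod_cast congrArg (fun z : ℤ => (z : ℚ)) (h2 t)
    · have := h3 t
      push_cast
      rw [show ((ε t : ℚ)) ^ 2 = ((ε t ^ 2 : ℤ) : ℚ) by push_cast; ring, this]
      norm_num
    · exact_mod_cast congrArg (fun z : ℤ => (z : ℚ)) (h4 q)
  exact RingHom.mem_ker.mp (hle hp)

noncomputable def phi (ε : Tri 4 → ℤ)
    (h : ∀ p ∈ Ideal.span (relC 4), aeval (asgn ε) p = 0) : Rdelta 4 →ₐ[ℚ] ℚ :=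
  Ideal.Quotient.liftₐ (Ideal.span (relC 4)) (aeval (asgn ε)) h

lemma phi_cR (ε : Tri 4 → ℤ) (h) (t : Tri 4) : phi ε h (cR t) = (ε t : ℚ) := by
  simp only [phi, cR, Ideal.Quotient.liftₐ_apply, Ideal.Quotient.lift_mk, AlgHom.coe_toRingHom,
    aeval_X]
  erw [Ideal.Quotient.lift_mk]
  simp [asgn]

noncomputable def φ1 : Rdelta 4 →ₐ[ℚ] ℚ :=
  phi eps1 (ker_cond _ (by decide) (by decide) (by decide) (by decide))
noncomputable def φ2 : Rdelta 4 →ₐ[ℚ] ℚ :=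
  phi eps2 (ker_cond _ (by decide) (by decide) (by decide) (by decide))
noncomputable def φ3 : Rdelta 4 →ₐ[ℚ] ℚ :=
  phi eps3 (ker_cond _ (by decide) (by decide) (by decide) (by decide))

lemma phi_w (ε : Tri 4 → ℤ) (h) : phi ε h wR = (1/2) * ((ε t123 : ℚ) - ε t124) := by
  simp [wR, map_sub, phi_cR]; try ring
lemma phi_z1 (ε : Tri 4 → ℤ) (h) : phi ε h z₁R = (1/2) * ((ε t123 : ℚ) + ε t124) := by
  simp [z₁R, map_add, phi_cR]; try ring
lemma phi_z2 (ε : Tri 4 → ℤ) (h) : phi ε h z₂R = (1/2) * ((ε t342 : ℚ) + ε t341) := by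
  simp [z₂R, map_add, phi_cR]; try ring

lemma φ1_w : φ1 wR = 1 := by
  rw [φ1, phi_w, show eps1 t123 = 1 by decide, show eps1 t124 = -1 by decide]; norm_num
lemma φ1_z1 : φ1 z₁R = 0 := by
  rw [φ1, phi_z1, show eps1 t123 = 1 by decide, show eps1 t124 = -1 by decide]; norm_num
lemma φ1_z2 : φ1 z₂R = 0 := by
  rw [φ1, phi_z2, show eps1 t342 = 1 by decide, show eps1 t341 = -1 by decide]; norm_num
lemma φ2_w : φ2 wR = 0 := by
  rw [φ2, phi_w, show eps2 t123 = 1 by decide, show eps2 t124 = 1 by decide]; norm_num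
lemma φ2_z1 : φ2 z₁R = 1 := by
  rw [φ2, phi_z1, show eps2 t123 = 1 by decide, show eps2 t124 = 1 by decide]; norm_num
lemma φ2_z2 : φ2 z₂R = 1 := by
  rw [φ2, phi_z2, show eps2 t342 = 1 by decide, show eps2 t341 = 1 by decide]; norm_num
lemma φ3_w : φ3 wR = 0 := by
  rw [φ3, phi_w, show eps3 t123 = 1 by decide, show eps3 t124 = 1 by decide]; norm_num
lemma φ3_z1 : φ3 z₁R = 1 := by
  rw [φ3, phi_z1, show eps3 t123 = 1 by decide, show eps3 t124 = 1 by decide]; norm_num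
lemma φ3_z2 : φ3 z₂R = -1 := by
  rw [φ3, phi_z2, show eps3 t342 = -1 by decide, show eps3 t341 = -1 by decide]; norm_num

end Aux

/-- In `R₄^δ`, with `w = (c_{123} − c_{124})/2`, `z₁ = (c_{123} + c_{124})/2`,
`z₂ = (c_{342} + c_{341})/2`, the three elements `w^n`, `z₁^n`, `z₁^{n−1} z₂` are
linearly independent over ℚ for every `n ≥ 1`. -/
theorem stmt_14 (n : ℕ) (hn : 1 ≤ n) :
    LinearIndependent ℚ ![wR ^ n, z₁R ^ n, z₁R ^ (n - 1) * z₂R] := by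
  have hn0 : n ≠ 0 := by omega
  set Φ : Rdelta 4 →ₗ[ℚ] (Fin 3 → ℚ) :=
    LinearMap.pi ![φ1.toLinearMap, φ2.toLinearMap, φ3.toLinearMap] with hΦ
  apply LinearIndependent.of_comp Φ
  have key : Φ ∘ ![wR ^ n, z₁R ^ n, z₁R ^ (n - 1) * z₂R] =
      ![![1, 0, 0], ![0, 1, 1], ![0, 1, -1]] := by
    funext i j
    fin_cases i <;> fin_cases j <;>
      simp [hΦ, LinearMap.pi_apply, map_pow, map_mul, Matrix.vecHead, Matrix.vecTail,
        φ1_w, φ1_z1, φ1_z2, φ2_w, φ2_z1, φ2_z2, φ3_w, φ3_z1, φ3_z2, hn0]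
  rw [key]
  rw [Fintype.linearIndependent_iff]
  intro g hg
  have e0 := congrFun hg 0
  have e1 := congrFun hg 1
  have e2 := congrFun hg 2
  simp [Fin.sum_univ_three, Matrix.vecHead, Matrix.vecTail] at e0 e1 e2
  intro i
  fin_cases i <;> simp <;> linarith [e0, e1, e2]
end
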